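/- arXiv:1904.04885 — 9 statements merged into one kernel-verified Lean document; each statement's English description precedes it below -/
import Mathlib

section
/- Let M be an n×n real matrix of the form M = Eᵀ A E where E is an m×n matrix and A is an m×m positive definite symmetric matrix. Then the linear map x ↦ Mx on ℝⁿ is cocoercive, i.e., there exists c > 0 such that ⟨Mx − My, x − y⟩ ≥ c‖Mx − My‖² for all x, y ∈ ℝⁿ. -/
/-!
Factor `A = Bᵀ B`, so that `M = Cᵀ C` with `C = B E`. For `v = x - y` and `w = C v` we get
`⟪M v, v⟫ = ‖w‖²`, while `‖M v‖² = ‖Cᵀ w‖² ≤ S ‖w‖²` by Cauchy–Schwarz row by row, where `S` is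
the sum of the squares of the entries of `C`. Hence `c = 1 / (S + 1)` works.
-/

open Matrix

namespace Matrix

variable {m n : Type*} [Fintype m] [Fintype n]

theorem mulVec_dotProduct_mulVec_le (D : Matrix m n ℝ) (u : n → ℝ) :
    D *ᵥ u ⬝ᵥ D *ᵥ u ≤ (∑ i, ∑ j, D i j ^ 2) * (u ⬝ᵥ u) := by
  simp only [dotProduct, mulVec, ← sq]
  rw [Finset.sum_mul]
  exact Finset.sum_le_sum fun i _ => Finset.sum_mul_sq_le_sq_mul_sq _ _ _

theorem PosSemidef.exists_eq_transpose_mul_self {A : Matrix n n ℝ} (hA : A.PosSemidef) :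
    ∃ B : Matrix n n ℝ, A = Bᵀ * B := by
  classical
  open scoped MatrixOrder in
  simpa only [star_eq_conjTranspose, conjTranspose_eq_transpose_of_trivial] using
    CStarAlgebra.nonneg_iff_eq_star_mul_self.mp hA.nonneg

theorem transpose_mul_self_cocoercive (C : Matrix m n ℝ) :
    ∃ c : ℝ, 0 < c ∧ ∀ v : n → ℝ,
      c * ((Cᵀ * C) *ᵥ v ⬝ᵥ (Cᵀ * C) *ᵥ v) ≤ (Cᵀ * C) *ᵥ v ⬝ᵥ v := by
  set S := ∑ i, ∑ j, Cᵀ i j ^ 2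
  have hS : 0 ≤ S := by positivity
  refine ⟨1 / (S + 1), by positivity, fun v => ?_⟩
  set w := C *ᵥ v
  have hMv : (Cᵀ * C) *ᵥ v = Cᵀ *ᵥ w := (mulVec_mulVec v Cᵀ C).symm
  have hinner : Cᵀ *ᵥ w ⬝ᵥ v = w ⬝ᵥ w := by
    rw [dotProduct_comm, dotProduct_mulVec, vecMul_transpose]
  have hw : 0 ≤ w ⬝ᵥ w := by simpa using dotProduct_star_self_nonneg w
  rw [hMv, hinner, one_div_mul_eq_div, div_le_iff₀ (by positivity)]
  calc Cᵀ *ᵥ w ⬝ᵥ Cᵀ *ᵥ w ≤ S * (w ⬝ᵥ w) := mulVec_dotProduct_mulVec_le Cᵀ w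
    _ ≤ (w ⬝ᵥ w) * (S + 1) := by nlinarith

end Matrix

theorem psdPlus_matrix_cocoercive
    {m n : ℕ} (E : Matrix (Fin m) (Fin n) ℝ) (A : Matrix (Fin m) (Fin m) ℝ)
    (hAsymm : A.IsSymm)
    (hApos : ∀ v : Fin m → ℝ, v ≠ 0 → 0 < A.mulVec v ⬝ᵥ v)
    (M : Matrix (Fin n) (Fin n) ℝ) (hM : M = Eᵀ * A * E) :
    ∃ c : ℝ, 0 < c ∧ ∀ x y : Fin n → ℝ,
      (M.mulVec x - M.mulVec y) ⬝ᵥ (x - y) ≥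
        c * ((M.mulVec x - M.mulVec y) ⬝ᵥ (M.mulVec x - M.mulVec y)) := by
  have hA : A.PosSemidef := .of_dotProduct_mulVec_nonneg (isHermitian_iff_isSymm.mpr hAsymm)
    fun v => by
      rcases eq_or_ne v 0 with rfl | hv
      · simp
      · simpa [dotProduct_comm] using (hApos v hv).le
  obtain ⟨B, rfl⟩ := hA.exists_eq_transpose_mul_self
  have hMC : M = (B * E)ᵀ * (B * E) := by simp only [hM, transpose_mul, Matrix.mul_assoc]
  obtain ⟨c, hc, hcoc⟩ := transpose_mul_self_cocoercive (B * E)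
  refine ⟨c, hc, fun x y => ?_⟩
  rw [← mulVec_sub, hMC]
  exact hcoc (x - y)
end

section
/- Let f : Ω → ℝ be a C¹ function on an open convex set Ω ⊆ ℝⁿ whose gradient ∇f is locally Lipschitz, and fix y ∈ ℝⁿ with ‖y‖ ≤ 1. If at almost every x ∈ Ω the function f is twice differentiable with operator norm ‖∇²f(x)‖ ≤ 1, then the function g_y(x) := ⟨∇f(x), y⟩ is ‖y‖-Lipschitz on Ω; consequently ∇f is 1-Lipschitz on Ω. -/
/-!
Composing with a norming functional reduces the Lipschitz bound to real-valued `ψ`. For `a, b ∈ Ω`,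
Fubini shows that almost every line parallel to `[a, b]` meets the null set where the derivative
bound fails in a null set of times. Along such a line `ψ` is Lipschitz, hence absolutely
continuous, so the fundamental theorem of calculus bounds its increment by `L * ‖b - a‖`; these
lines accumulate at `[a, b]`, and continuity of `ψ` passes the bound to the limit.
-/

open scoped RealInnerProductSpace NNReal

open MeasureTheory Set Filter Topology Metric

theorem AbsolutelyContinuousOnInterval.sub_le_mul_of_ae_deriv_le {φ : ℝ → ℝ} {a b c : ℝ}
    (hab : a ≤ b) (hφ : AbsolutelyContinuousOnInterval φ a b)
    (hderiv : ∀ᵐ t, t ∈ Icc a b → deriv φ t ≤ c) : φ b - φ a ≤ c * (b - a) := by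
  rw [← hφ.integral_deriv_eq_sub]
  calc ∫ t in a..b, deriv φ t ≤ ∫ _ in a..b, c :=
        intervalIntegral.integral_mono_ae_restrict hab hφ.intervalIntegrable_deriv
          intervalIntegrable_const ((ae_restrict_iff' measurableSet_Icc).2 hderiv)
    _ = c * (b - a) := by simp [mul_comm]

theorem LipschitzWith.comp_locallyLipschitzOn {α β γ : Type*} [PseudoEMetricSpace α]
    [PseudoEMetricSpace β] [PseudoEMetricSpace γ] {K : ℝ≥0} {f : β → γ} {g : α → β} {s : Set α}
    (hf : LipschitzWith K f) (hg : LocallyLipschitzOn s g) : LocallyLipschitzOn s (f ∘ g) :=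
  fun _ hx ↦
    let ⟨Kg, t, ht, hgt⟩ := hg hx
    ⟨K * Kg, t, ht, hf.comp_lipschitzOnWith hgt⟩

theorem lipschitzWith_add_smul {E : Type*} [SeminormedAddCommGroup E] [NormedSpace ℝ E]
    (w v : E) : LipschitzWith ‖v‖₊ fun t : ℝ ↦ w + t • v :=
  LipschitzWith.of_dist_le_mul fun s t ↦ by
    rw [dist_eq_norm, dist_eq_norm, add_sub_add_left_eq_sub, ← sub_smul, norm_smul, mul_comm,
      coe_nnnorm]

theorem ae_ae_add_smul_of_ae {E : Type*} [NormedAddCommGroup E] [NormedSpace ℝ E]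
    [MeasurableSpace E] [BorelSpace E] [SecondCountableTopology E]
    {μ : Measure E} [SFinite μ] [μ.IsAddLeftInvariant] {p : E → Prop}
    (hp : ∀ᵐ x ∂μ, p x) (v : E) : ∀ᵐ w ∂μ, ∀ᵐ t : ℝ, p (w + t • v) := by
  set N := toMeasurable μ {x | ¬ p x}
  have hN : ∀ᵐ x ∂μ, x ∉ N :=
    measure_eq_zero_iff_ae_notMem.1 ((measure_toMeasurable _).trans hp)
  have hline : ∀ t : ℝ, ∀ᵐ w ∂μ, w + t • v ∉ N := fun t ↦
    (quasiMeasurePreserving_add_right μ (t • v)).ae hN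
  have hmeas : MeasurableSet {z : E × ℝ | z.1 + z.2 • v ∉ N} :=
    (measurableSet_toMeasurable μ _).compl.preimage (by fun_prop)
  have hswap : ∀ᵐ w ∂μ, ∀ᵐ t : ℝ, w + t • v ∉ N :=
    (Measure.ae_ae_comm (μ := μ) (ν := volume) hmeas).2 (ae_of_all _ hline)
  filter_upwards [hswap] with w hw
  filter_upwards [hw] with t ht
  by_contra h
  exact ht (subset_toMeasurable μ _ h)

theorem LipschitzOnWith.apply_add_sub_le_of_ae_norm_fderiv_le {E : Type*}
    [NormedAddCommGroup E] [NormedSpace ℝ E] {ψ : E → ℝ} {K : ℝ≥0} {s : Set E}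
    (hψ : LipschitzOnWith K ψ s) {w v : E} (hs : MapsTo (fun t : ℝ ↦ w + t • v) (Icc 0 1) s)
    {L : ℝ} (hae : ∀ᵐ t : ℝ, t ∈ Icc 0 1 →
      ∃ D : E →L[ℝ] ℝ, HasFDerivAt ψ D (w + t • v) ∧ ‖D‖ ≤ L) :
    ψ (w + v) - ψ w ≤ L * ‖v‖ := by
  have hac : AbsolutelyContinuousOnInterval (fun t : ℝ ↦ ψ (w + t • v)) 0 1 := by
    refine LipschitzOnWith.absolutelyContinuousOnInterval (K := K * ‖v‖₊) ?_
    rw [uIcc_of_le zero_le_one]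
    exact hψ.comp (lipschitzWith_add_smul w v).lipschitzOnWith hs
  have hderiv : ∀ᵐ t : ℝ, t ∈ Icc 0 1 → deriv (fun t : ℝ ↦ ψ (w + t • v)) t ≤ L * ‖v‖ := by
    filter_upwards [hae] with t ht hmem
    obtain ⟨D, hD, hDL⟩ := ht hmem
    have hline : HasDerivAt (fun t : ℝ ↦ w + t • v) v t := by
      simpa using ((hasDerivAt_id t).smul_const v).const_add w
    have hφ : HasDerivAt (fun t : ℝ ↦ ψ (w + t • v)) (D v) t := hD.comp_hasDerivAt t hline
    rw [hφ.deriv]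
    calc D v ≤ ‖D v‖ := le_abs_self _
      _ ≤ ‖D‖ * ‖v‖ := D.le_opNorm v
      _ ≤ L * ‖v‖ := by gcongr
  simpa using hac.sub_le_mul_of_ae_deriv_le zero_le_one hderiv

section FiniteDimensional

variable {E : Type*} [NormedAddCommGroup E] [NormedSpace ℝ E] [FiniteDimensional ℝ E]
  [MeasurableSpace E] [BorelSpace E] {μ : Measure E} [μ.IsAddHaarMeasure] {Ω : Set E}

theorem LocallyLipschitzOn.sub_le_mul_norm_of_ae_norm_fderiv_le (hΩo : IsOpen Ω)
    (hΩc : Convex ℝ Ω) {ψ : E → ℝ} (hψ : LocallyLipschitzOn Ω ψ) {L : ℝ}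
    (hae : ∀ᵐ x ∂μ, x ∈ Ω → ∃ D : E →L[ℝ] ℝ, HasFDerivAt ψ D x ∧ ‖D‖ ≤ L)
    {a b : E} (ha : a ∈ Ω) (hb : b ∈ Ω) :
    ψ b - ψ a ≤ L * ‖b - a‖ := by
  set v := b - a
  have hseg : IsCompact (segment ℝ a b) := by
    rw [segment_eq_image']
    exact isCompact_Icc.image (by fun_prop)
  obtain ⟨δ, hδ, hCΩ⟩ := hseg.exists_cthickening_subset_open hΩo (hΩc.segment_subset ha hb)
  obtain ⟨K, hK⟩ := (hψ.mono hCΩ).exists_lipschitzOnWith_of_compact hseg.cthickening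
  have hmaps : ∀ w ∈ ball a δ,
      MapsTo (fun t : ℝ ↦ w + t • v) (Icc 0 1) (cthickening δ (segment ℝ a b)) := by
    intro w hw t ht
    refine mem_cthickening_of_dist_le _ (a + t • v) _ _ ?_ ?_
    · rw [segment_eq_image']
      exact ⟨t, ht, rfl⟩
    · rw [dist_eq_norm, add_sub_add_right_eq_sub, ← dist_eq_norm]
      exact (mem_ball.1 hw).le
  set good := {w | ∀ᵐ t : ℝ, w + t • v ∈ Ω →
    ∃ D : E →L[ℝ] ℝ, HasFDerivAt ψ D (w + t • v) ∧ ‖D‖ ≤ L}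
  have hgood : a ∈ closure (ball a δ ∩ good) :=
    (Measure.dense_of_ae (ae_ae_add_smul_of_ae hae v)).open_subset_closure_inter isOpen_ball
      (mem_ball_self hδ)
  have hline : ∀ w ∈ ball a δ ∩ good, ψ (w + v) - ψ w ≤ L * ‖v‖ := by
    rintro w ⟨hw, hwgood⟩
    refine hK.apply_add_sub_le_of_ae_norm_fderiv_le (hmaps w hw) ?_
    filter_upwards [show ∀ᵐ t : ℝ, _ from hwgood] with t ht htI using ht (hCΩ (hmaps w hw htI))
  have hcont : ContinuousAt (fun w ↦ ψ (w + v) - ψ w) a := by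
    have hψc := hψ.continuousOn
    refine ContinuousAt.sub ?_ (hψc.continuousAt (hΩo.mem_nhds ha))
    refine ContinuousAt.comp_of_eq (hψc.continuousAt (hΩo.mem_nhds hb)) (by fun_prop) ?_
    simp [v]
  have hab : a + v = b := add_sub_cancel a b
  simpa only [hab] using
    hcont.continuousWithinAt.closure_le hgood continuousWithinAt_const hline

theorem LocallyLipschitzOn.lipschitzOnWith_of_ae_norm_fderiv_le {F : Type*}
    [NormedAddCommGroup F] [NormedSpace ℝ F] (hΩo : IsOpen Ω) (hΩc : Convex ℝ Ω) {g : E → F}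
    (hg : LocallyLipschitzOn Ω g) {L : ℝ≥0}
    (hae : ∀ᵐ x ∂μ, x ∈ Ω → ∃ D : E →L[ℝ] F, HasFDerivAt g D x ∧ ‖D‖ ≤ L) :
    LipschitzOnWith L g Ω := by
  refine LipschitzOnWith.of_dist_le_mul fun b hb a ha ↦ ?_
  obtain ⟨ℓ, hℓ, hℓg⟩ := exists_dual_vector'' ℝ (g b - g a)
  have hℓae : ∀ᵐ x ∂μ, x ∈ Ω →
      ∃ D : E →L[ℝ] ℝ, HasFDerivAt (ℓ ∘ g) D x ∧ ‖D‖ ≤ L := by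
    filter_upwards [hae] with x hx hxΩ
    obtain ⟨D, hD, hDL⟩ := hx hxΩ
    refine ⟨ℓ.comp D, ℓ.hasFDerivAt.comp x hD, ?_⟩
    calc ‖ℓ.comp D‖ ≤ ‖ℓ‖ * ‖D‖ := ℓ.opNorm_comp_le D
      _ ≤ 1 * L := by gcongr
      _ = L := one_mul _
  have := (ℓ.lipschitz.comp_locallyLipschitzOn hg).sub_le_mul_norm_of_ae_norm_fderiv_le
    hΩo hΩc hℓae ha hb
  simpa [dist_eq_norm, ← map_sub, hℓg] using this

end FiniteDimensional

theorem ae_hessian_bound_implies_gradient_lipschitz_general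
    {n : ℕ} (Ω : Set (EuclideanSpace ℝ (Fin n)))
    (hΩopen : IsOpen Ω) (hΩconv : Convex ℝ Ω)
    (f : EuclideanSpace ℝ (Fin n) → ℝ)
    (hloc : ∀ x ∈ Ω, ∃ s ∈ nhds x, ∃ K : NNReal, LipschitzOnWith K (gradient f) s)
    (y : EuclideanSpace ℝ (Fin n))
    (hae : ∀ᵐ x ∂MeasureTheory.volume, x ∈ Ω →
      ∃ f'' : EuclideanSpace ℝ (Fin n) →L[ℝ] EuclideanSpace ℝ (Fin n),
        HasFDerivAt (gradient f) f'' x ∧ ‖f''‖ ≤ 1) :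
    LipschitzOnWith ‖y‖₊ (fun x => ⟪gradient f x, y⟫) Ω ∧
      LipschitzOnWith 1 (gradient f) Ω := by
  have hlocOn : LocallyLipschitzOn Ω (gradient f) := fun x hx ↦
    let ⟨s, hs, K, hK⟩ := hloc x hx
    ⟨K, s, nhdsWithin_le_nhds hs, hK⟩
  have hgrad : LipschitzOnWith 1 (gradient f) Ω :=
    hlocOn.lipschitzOnWith_of_ae_norm_fderiv_le hΩopen hΩconv (by simpa using hae)
  refine ⟨?_, hgrad⟩
  have hinner : LipschitzWith ‖y‖₊ fun z ↦ ⟪z, y⟫ :=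
    LipschitzWith.of_dist_le_mul fun z z' ↦ by
      rw [Real.dist_eq, ← inner_sub_left, dist_eq_norm, coe_nnnorm, mul_comm]
      exact abs_real_inner_le_norm _ _
  exact mul_one ‖y‖₊ ▸ hinner.comp_lipschitzOnWith hgrad

theorem ae_hessian_bound_implies_gradient_lipschitz
    {n : ℕ} (Ω : Set (EuclideanSpace ℝ (Fin n)))
    (hΩopen : IsOpen Ω) (hΩconv : Convex ℝ Ω)
    (f : EuclideanSpace ℝ (Fin n) → ℝ)
    (hf : ContDiffOn ℝ 1 f Ω)
    (hloc : ∀ x ∈ Ω, ∃ s ∈ nhds x, ∃ K : NNReal, LipschitzOnWith K (gradient f) s)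
    (y : EuclideanSpace ℝ (Fin n)) (hy : ‖y‖ ≤ 1)
    (hae : ∀ᵐ x ∂MeasureTheory.volume, x ∈ Ω →
      ∃ f'' : EuclideanSpace ℝ (Fin n) →L[ℝ] EuclideanSpace ℝ (Fin n),
        HasFDerivAt (gradient f) f'' x ∧ ‖f''‖ ≤ 1) :
    LipschitzOnWith ‖y‖₊ (fun x => ⟪gradient f x, y⟫) Ω ∧
      LipschitzOnWith 1 (gradient f) Ω :=
  ae_hessian_bound_implies_gradient_lipschitz_general Ω hΩopen hΩconv f hloc y hae
end

section
/- Let Ω ⊆ ℝⁿ be a nonempty open convex set, f : Ω → ℝ a convex C¹ function with locally Lipschitz gradient, and β > 0. Then the function x ↦ (β/2)‖x‖² − f(x) is convex on Ω if and only if ∇f is 1/β-cocoercive on Ω, i.e., β⟨∇f(x) − ∇f(y), x − y⟩ ≥ ‖∇f(x) − ∇f(y)‖² for all x, y ∈ Ω. -/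
/-!
Convexity of `β / 2 * ‖x‖ ^ 2 - f` is equivalent to `⟪∇f x - ∇f y, x - y⟫ ≤ β * ‖x - y‖ ^ 2`,
so together with the monotonicity of `∇f` it says "`0 ≤ ∇²f ≤ β`" on `Ω`. Cocoercivity gives
the upper bound by Cauchy–Schwarz. Conversely, put `d = x - y` and `w = ∇f x - ∇f y`. Formally
`w = A d` with `A = ∫₀¹ ∇²f (y + t • d) dt`, and `0 ≤ ⟪A (d + v), d + v⟫`, `⟪A v, v⟫ ≤ β * ‖v‖ ^ 2`
give `0 ≤ ⟪w, d⟫ + 2 * ⟪w, v⟫ + β * ‖v‖ ^ 2` for every `v`; with `v = -β⁻¹ • w` this is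
cocoercivity. Without second derivatives, the two monotonicity bounds, applied between
`y + t • d + ε • (d + v)`, `y + t • d` and `y + (t + ε) • d`, make a function of `t` increasing on
`[0, 1]`; comparing its endpoints and differentiating at `ε = 0` gives the quadratic inequality.
-/

open scoped RealInnerProductSpace
open Set Filter Topology

theorem ContinuousOn.hasDerivAt_integral_of_isOpen {F : Type*} [NormedAddCommGroup F]
    [NormedSpace ℝ F] [CompleteSpace F] {ψ : ℝ → F} {U : Set ℝ} (hU : IsOpen U)
    (hUc : U.OrdConnected) (hψ : ContinuousOn ψ U) {a b : ℝ} (ha : a ∈ U) (hb : b ∈ U) :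
    HasDerivAt (fun s => ∫ t in a..s, ψ t) (ψ b) b :=
  intervalIntegral.integral_hasDerivAt_right
    ((hψ.mono (hUc.uIcc_subset ha hb)).intervalIntegrable)
    (hψ.stronglyMeasurableAtFilter hU b hb) (hψ.continuousAt (hU.mem_nhds hb))

theorem HasDerivAt.le_of_eventually_le_nhdsGT {L R : ℝ → ℝ} {L' R' a : ℝ}
    (hL : HasDerivAt L L' a) (hR : HasDerivAt R R' a) (ha : L a = R a)
    (hLR : ∀ᶠ ε in 𝓝[>] a, L ε ≤ R ε) : L' ≤ R' := by
  have hslope := (hasDerivWithinAt_iff_tendsto_slope' self_notMem_Ioi).1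
    ((hR.sub hL).hasDerivWithinAt (s := Ioi a))
  rw [← sub_nonneg]
  refine ge_of_tendsto hslope ?_
  filter_upwards [hLR, self_mem_nhdsWithin] with ε hε (hεa : a < ε)
  rw [slope_def_field]
  exact div_nonneg (by simp only [Pi.sub_apply]; linarith) (sub_nonneg.2 hεa.le)

section Normed

variable {E : Type*} [NormedAddCommGroup E] [NormedSpace ℝ E] {Ω : Set E}

theorem Convex.exists_pos_forall_segment_ball_subset (hΩo : IsOpen Ω) (hΩ : Convex ℝ Ω)
    {x y : E} (hx : x ∈ Ω) (hy : y ∈ Ω) :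
    ∃ r > 0, ∀ z ∈ segment ℝ x y, Metric.ball z r ⊆ Ω := by
  obtain ⟨rx, hrx, hbx⟩ := Metric.isOpen_iff.1 hΩo x hx
  obtain ⟨ry, hry, hby⟩ := Metric.isOpen_iff.1 hΩo y hy
  refine ⟨min rx ry, lt_min hrx hry, ?_⟩
  rintro _ ⟨a, b, ha, hb, hab, rfl⟩ u hu
  rw [Metric.mem_ball, dist_eq_norm] at hu
  have hux : x + (u - (a • x + b • y)) ∈ Ω :=
    hbx (by simpa using hu.trans_le (min_le_left _ _))
  have huy : y + (u - (a • x + b • y)) ∈ Ω :=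
    hby (by simpa using hu.trans_le (min_le_right _ _))
  convert hΩ hux huy ha hb hab using 1
  rw [eq_sub_of_add_eq hab]; module

end Normed

section InnerProduct

variable {E : Type*} [NormedAddCommGroup E] [InnerProductSpace ℝ E]

theorem real_inner_le_mul_norm_sq_of_norm_sq_le {β : ℝ} {w d : E} (hβ : 0 ≤ β)
    (h : ‖w‖ ^ 2 ≤ β * ⟪w, d⟫) : ⟪w, d⟫ ≤ β * ‖d‖ ^ 2 := by
  have hcs := real_inner_le_norm w d
  rcases le_or_gt ‖w‖ (β * ‖d‖) with hle | hlt
  · nlinarith [mul_le_mul_of_nonneg_right hle (norm_nonneg d)]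
  · have hw : 0 < ‖w‖ := lt_of_le_of_lt (by positivity) hlt
    nlinarith [mul_le_mul_of_nonneg_left hcs hβ, mul_lt_mul_of_pos_left hlt hw]

variable [CompleteSpace E] {Ω : Set E} {h : E → ℝ} {G : E → E}

theorem HasGradientAt.hasDerivAt_comp_add_smul {g a v : E} {t : ℝ}
    (hg : HasGradientAt h g (a + t • v)) :
    HasDerivAt (fun s : ℝ => h (a + s • v)) ⟪g, v⟫ t := by
  have hline : HasDerivAt (fun s : ℝ => a + s • v) v t := by
    simpa using ((hasDerivAt_id t).smul_const v).const_add a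
  exact hg.hasFDerivAt.comp_hasDerivAt t hline

theorem ConvexOn.inner_le_sub_of_hasGradientAt (hh : ConvexOn ℝ Ω h) {g x y : E}
    (hx : x ∈ Ω) (hy : y ∈ Ω) (hg : HasGradientAt h g x) : ⟪g, y - x⟫ ≤ h y - h x := by
  have hline : (fun s : ℝ => h (x + s • (y - x))) = h ∘ AffineMap.lineMap x y := by
    ext s; simp [AffineMap.lineMap_apply_module', add_comm]
  have hconv := hh.comp_affineMap (AffineMap.lineMap x y)
  rw [← hline] at hconv
  have hder : HasDerivAt (fun s : ℝ => h (x + s • (y - x))) ⟪g, y - x⟫ 0 :=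
    HasGradientAt.hasDerivAt_comp_add_smul (by simpa using hg)
  simpa [slope] using hconv.le_slope_of_hasDerivAt (x := 0) (y := 1) (by simpa using hx)
    (by simpa using hy) zero_lt_one hder

theorem ConvexOn.inner_sub_nonneg_of_hasGradientAt (hh : ConvexOn ℝ Ω h)
    (hG : ∀ x ∈ Ω, HasGradientAt h (G x) x) {x y : E} (hx : x ∈ Ω) (hy : y ∈ Ω) :
    0 ≤ ⟪G x - G y, x - y⟫ := by
  have hxy := hh.inner_le_sub_of_hasGradientAt hx hy (hG x hx)
  have hyx := hh.inner_le_sub_of_hasGradientAt hy hx (hG y hy)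
  rw [← neg_sub x y, inner_neg_right] at hxy
  rw [inner_sub_left]
  linarith

theorem convexOn_of_inner_sub_nonneg (hΩ : Convex ℝ Ω) (hG : ∀ x ∈ Ω, HasGradientAt h (G x) x)
    (hmono : ∀ x ∈ Ω, ∀ y ∈ Ω, 0 ≤ ⟪G x - G y, x - y⟫) : ConvexOn ℝ Ω h := by
  refine ⟨hΩ, fun x hx y hy a b ha hb hab => ?_⟩
  set φ : ℝ → ℝ := fun s => h (x + s • (y - x))
  have hmem : ∀ s ∈ Icc (0 : ℝ) 1, x + s • (y - x) ∈ Ω := fun s hs => by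
    simpa [AffineMap.lineMap_apply_module', add_comm] using
      hΩ.lineMap_mem hx hy hs
  have hder : ∀ s ∈ Icc (0 : ℝ) 1, HasDerivAt φ ⟪G (x + s • (y - x)), y - x⟫ s :=
    fun s hs => (hG _ (hmem s hs)).hasDerivAt_comp_add_smul
  have hφ : ConvexOn ℝ (Icc 0 1) φ := by
    refine MonotoneOn.convexOn_of_deriv (convex_Icc 0 1)
      (fun s hs => (hder s hs).continuousAt.continuousWithinAt)
      (fun s hs => (hder s (interior_subset hs)).differentiableAt.differentiableWithinAt) ?_
    intro s hs s' hs' hss'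
    rw [(hder s (interior_subset hs)).deriv, (hder s' (interior_subset hs')).deriv]
    have key := hmono _ (hmem s' (interior_subset hs')) _ (hmem s (interior_subset hs))
    rw [show x + s' • (y - x) - (x + s • (y - x)) = (s' - s) • (y - x) by module,
      real_inner_smul_right, inner_sub_left] at key
    rcases hss'.eq_or_lt with rfl | hlt
    · exact le_rfl
    · linarith [(mul_nonneg_iff_of_pos_left (sub_pos.2 hlt)).1 key]
  have hpt : x + (a • (0 : ℝ) + b • 1) • (y - x) = a • x + b • y := by
    rw [eq_sub_of_add_eq hab]; simp only [smul_eq_mul]; module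
  calc h (a • x + b • y) = φ (a • 0 + b • 1) := by simp only [φ, hpt]
    _ ≤ a • φ 0 + b • φ 1 :=
      hφ.2 (left_mem_Icc.2 zero_le_one) (right_mem_Icc.2 zero_le_one) ha hb hab
    _ = a • h x + b • h y := by simp [φ]

theorem convexOn_iff_inner_sub_nonneg (hΩ : Convex ℝ Ω) (hG : ∀ x ∈ Ω, HasGradientAt h (G x) x) :
    ConvexOn ℝ Ω h ↔ ∀ x ∈ Ω, ∀ y ∈ Ω, 0 ≤ ⟪G x - G y, x - y⟫ :=
  ⟨fun hh _ hx _ hy => hh.inner_sub_nonneg_of_hasGradientAt hG hx hy,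
    convexOn_of_inner_sub_nonneg hΩ hG⟩

theorem HasGradientAt.half_mul_norm_sq_sub {g x : E} (hg : HasGradientAt h g x) (β : ℝ) :
    HasGradientAt (fun x => β / 2 * ‖x‖ ^ 2 - h x) (β • x - g) x := by
  rw [hasGradientAt_iff_hasFDerivAt]
  refine (((hasStrictFDerivAt_norm_sq x).hasFDerivAt.const_mul (β / 2)).fun_sub
    hg.hasFDerivAt).congr_fderiv ?_
  ext v
  simp [InnerProductSpace.toDual_apply_apply]
  ring

theorem convexOn_half_mul_norm_sq_sub_iff {f : E → ℝ} {β : ℝ} (hΩ : Convex ℝ Ω)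
    (hf : ∀ x ∈ Ω, DifferentiableAt ℝ f x) :
    ConvexOn ℝ Ω (fun x => β / 2 * ‖x‖ ^ 2 - f x) ↔
      ∀ x ∈ Ω, ∀ y ∈ Ω, ⟪gradient f x - gradient f y, x - y⟫ ≤ β * ‖x - y‖ ^ 2 := by
  rw [convexOn_iff_inner_sub_nonneg hΩ fun x hx => (hf x hx).hasGradientAt.half_mul_norm_sq_sub β]
  refine forall₂_congr fun x _ => forall₂_congr fun y _ => ?_
  rw [show β • x - gradient f x - (β • y - gradient f y)
      = β • (x - y) - (gradient f x - gradient f y) by module,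
    inner_sub_left, real_inner_smul_left, real_inner_self_eq_norm_sq, sub_nonneg]

theorem second_difference_le_of_inner_sub_bounds {β : ℝ}
    (hG : ∀ z ∈ Ω, HasGradientAt h (G z) z)
    (hmono : ∀ a ∈ Ω, ∀ b ∈ Ω, 0 ≤ ⟪G a - G b, a - b⟫)
    (hup : ∀ a ∈ Ω, ∀ b ∈ Ω, ⟪G a - G b, a - b⟫ ≤ β * ‖a - b‖ ^ 2)
    {x y v : E} {Ψ : ℝ → ℝ} {ε : ℝ} (hε : 0 < ε)
    (hshift : ∀ t ∈ Icc (0 : ℝ) 1, y + ε • (x - y + v) + t • (x - y) ∈ Ω)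
    (hline : ∀ t ∈ Icc (0 : ℝ) (1 + ε), y + t • (x - y) ∈ Ω)
    (hΨ : ∀ t ∈ Icc (0 : ℝ) (1 + ε), HasDerivAt Ψ ⟪G (y + t • (x - y)), v⟫ t) :
    h (y + ε • (x - y + v)) - h y + (Ψ ε - Ψ 0) ≤
      h (x + ε • (x - y + v)) - h x + (Ψ (1 + ε) - Ψ 1) + β * ε * ‖v‖ ^ 2 := by
  set d := x - y with hd
  set p := d + v with hp
  set Φ : ℝ → ℝ := fun t =>
    h (y + ε • p + t • d) - h (y + t • d) + (Ψ (t + ε) - Ψ t) + t * (β * ε * ‖v‖ ^ 2)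
  have hmem : ∀ t ∈ Icc (0 : ℝ) 1, t ∈ Icc (0 : ℝ) (1 + ε) ∧ t + ε ∈ Icc (0 : ℝ) (1 + ε) :=
    fun t ht => ⟨⟨ht.1, by linarith [ht.2]⟩, ⟨by linarith [ht.1], by linarith [ht.2]⟩⟩
  have hΦ' : ∀ t ∈ Icc (0 : ℝ) 1, HasDerivAt Φ
      (⟪G (y + ε • p + t • d) - G (y + t • d), d⟫
        + (⟪G (y + (t + ε) • d), v⟫ - ⟪G (y + t • d), v⟫) + β * ε * ‖v‖ ^ 2) t := by
    intro t ht
    have hf₁ := (hG _ (hshift t ht)).hasDerivAt_comp_add_smul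
    have hf₂ := (hG _ (hline t (hmem t ht).1)).hasDerivAt_comp_add_smul
    have hΨ₁ := (hΨ _ (hmem t ht).2).comp_add_const t ε
    have hΨ₂ := hΨ t (hmem t ht).1
    rw [inner_sub_left]
    exact ((hf₁.sub hf₂).add (hΨ₁.sub hΨ₂)).add (hasDerivAt_mul_const _)
  have hΦ'_nonneg : ∀ t ∈ Icc (0 : ℝ) 1, 0 ≤ ⟪G (y + ε • p + t • d) - G (y + t • d), d⟫
        + (⟪G (y + (t + ε) • d), v⟫ - ⟪G (y + t • d), v⟫) + β * ε * ‖v‖ ^ 2 := by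
    intro t ht
    -- `ε` times the derivative is the lower bound between `y + ε • p + t • d` and `y + t • d`
    -- minus the upper bound between `y + ε • p + t • d` and `y + (t + ε) • d`.
    have hlow := hmono _ (hshift t ht) _ (hline t (hmem t ht).1)
    have hhigh := hup _ (hshift t ht) _ (hline _ (hmem t ht).2)
    rw [show y + ε • p + t • d - (y + t • d) = ε • (d + v) by rw [hp]; module] at hlow
    rw [show y + ε • p + t • d - (y + (t + ε) • d) = ε • v by rw [hp]; module] at hhigh
    simp only [inner_sub_left, inner_add_right, real_inner_smul_right, norm_smul,
      Real.norm_eq_abs, abs_of_pos hε] at hlow hhigh ⊢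
    nlinarith
  have hΦ_mono : MonotoneOn Φ (Icc 0 1) :=
    monotoneOn_of_hasDerivWithinAt_nonneg (convex_Icc 0 1)
      (fun t ht => (hΦ' t ht).continuousAt.continuousWithinAt)
      (fun t ht => (hΦ' t (interior_subset ht)).hasDerivWithinAt)
      (fun t ht => hΦ'_nonneg t (interior_subset ht))
  have h01 := hΦ_mono (left_mem_Icc.2 zero_le_one) (right_mem_Icc.2 zero_le_one) zero_le_one
  have hx : y + d = x := by rw [hd]; abel
  simp only [Φ, zero_smul, add_zero, zero_add, zero_mul, one_smul, one_mul, hx] at h01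
  rw [add_right_comm y, hx] at h01
  linarith

theorem inner_sub_add_two_mul_inner_add_mul_norm_sq_nonneg {β : ℝ} (hΩo : IsOpen Ω)
    (hΩ : Convex ℝ Ω) (hG : ∀ z ∈ Ω, HasGradientAt h (G z) z) (hGc : ContinuousOn G Ω)
    (hmono : ∀ a ∈ Ω, ∀ b ∈ Ω, 0 ≤ ⟪G a - G b, a - b⟫)
    (hup : ∀ a ∈ Ω, ∀ b ∈ Ω, ⟪G a - G b, a - b⟫ ≤ β * ‖a - b‖ ^ 2)
    {x y : E} (hx : x ∈ Ω) (hy : y ∈ Ω) (v : E) :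
    0 ≤ ⟪G x - G y, x - y⟫ + 2 * ⟪G x - G y, v⟫ + β * ‖v‖ ^ 2 := by
  set d := x - y
  set U : Set ℝ := {s | y + s • d ∈ Ω}
  have hUo : IsOpen U := hΩo.preimage (by fun_prop)
  have hUc : U.OrdConnected := by
    refine Convex.ordConnected fun s hs s' hs' a b ha hb hab => ?_
    show y + (a • s + b • s') • d ∈ Ω
    convert hΩ hs hs' ha hb hab using 1
    rw [eq_sub_of_add_eq hab]; module
  have h0 : (0 : ℝ) ∈ U := by simpa [U] using hy
  have h1 : (1 : ℝ) ∈ U := by simpa [U, d] using hx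
  have hψ : ContinuousOn (fun s => ⟪G (y + s • d), v⟫) U :=
    (hGc.comp (by fun_prop : Continuous fun s : ℝ => y + s • d).continuousOn
      fun _ hs => hs).inner continuousOn_const
  set Ψ : ℝ → ℝ := fun s => ∫ t in (0 : ℝ)..s, ⟪G (y + t • d), v⟫
  have hΨ : ∀ s ∈ U, HasDerivAt Ψ ⟪G (y + s • d), v⟫ s :=
    fun s hs => hψ.hasDerivAt_integral_of_isOpen hUo hUc h0 hs
  obtain ⟨r, hr, hball⟩ := hΩ.exists_pos_forall_segment_ball_subset hΩo hy hx
  set p := d + v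
  have hsmall : ∀ᶠ ε in 𝓝[>] (0 : ℝ), 0 < ε ∧ 1 + ε ∈ U ∧ ‖ε • p‖ < r := by
    have hU1 : ∀ᶠ ε in 𝓝 (0 : ℝ), 1 + ε ∈ U :=
      (continuous_const.add continuous_id).continuousAt.preimage_mem_nhds
        (by simpa using hUo.mem_nhds h1)
    have hp : ∀ᶠ ε in 𝓝 (0 : ℝ), ‖ε • p‖ < r :=
      (continuous_id.smul continuous_const).norm.continuousAt.eventually_lt
        continuousAt_const (by simpa using hr)
    filter_upwards [self_mem_nhdsWithin, nhdsWithin_le_nhds hU1, nhdsWithin_le_nhds hp]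
      with ε hε hε1 hεp using ⟨hε, hε1, hεp⟩
  have hL : HasDerivAt (fun ε => h (y + ε • p) - h y + (Ψ ε - Ψ 0))
      (⟪G y, p⟫ + ⟪G y, v⟫) 0 := by
    have hf : HasDerivAt (fun ε : ℝ => h (y + ε • p)) ⟪G y, p⟫ 0 :=
      HasGradientAt.hasDerivAt_comp_add_smul (by simpa using hG y hy)
    have hΨ0 : HasDerivAt Ψ ⟪G y, v⟫ 0 := by simpa using hΨ 0 h0
    exact (hf.sub_const (h y)).add (hΨ0.sub_const (Ψ 0))
  have hR : HasDerivAt (fun ε => h (x + ε • p) - h x + (Ψ (1 + ε) - Ψ 1) + β * ε * ‖v‖ ^ 2)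
      (⟪G x, p⟫ + ⟪G x, v⟫ + β * ‖v‖ ^ 2) 0 := by
    have hf : HasDerivAt (fun ε : ℝ => h (x + ε • p)) ⟪G x, p⟫ 0 :=
      HasGradientAt.hasDerivAt_comp_add_smul (by simpa using hG x hx)
    have hΨ1 : HasDerivAt (fun ε => Ψ (1 + ε)) ⟪G x, v⟫ 0 :=
      HasDerivAt.comp_const_add 1 0 (by simpa [d] using hΨ 1 h1)
    exact (((hf.sub_const (h x)).add (hΨ1.sub_const (Ψ 1))).add
      (((hasDerivAt_id (0 : ℝ)).const_mul β).mul_const (‖v‖ ^ 2))).congr_deriv (by simp)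
  have hderiv := hL.le_of_eventually_le_nhdsGT hR (by simp) <| by
    filter_upwards [hsmall] with ε ⟨hε, hε1, hεp⟩
    have hline : Icc 0 (1 + ε) ⊆ U := hUc.out h0 hε1
    refine second_difference_le_of_inner_sub_bounds hG hmono hup hε (fun t ht => ?_) hline
      fun t ht => hΨ t (hline ht)
    refine hball (y + t • d) (by rw [segment_eq_image']; exact ⟨t, ht, rfl⟩) ?_
    rwa [Metric.mem_ball, dist_eq_norm, add_right_comm, add_sub_cancel_left]
  simp only [p, inner_add_right] at hderiv
  rw [inner_sub_left, inner_sub_left]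
  linarith

theorem norm_sq_sub_le_mul_inner_sub {β : ℝ} (hβ : 0 < β) (hΩo : IsOpen Ω) (hΩ : Convex ℝ Ω)
    (hG : ∀ z ∈ Ω, HasGradientAt h (G z) z) (hGc : ContinuousOn G Ω)
    (hmono : ∀ a ∈ Ω, ∀ b ∈ Ω, 0 ≤ ⟪G a - G b, a - b⟫)
    (hup : ∀ a ∈ Ω, ∀ b ∈ Ω, ⟪G a - G b, a - b⟫ ≤ β * ‖a - b‖ ^ 2)
    {x y : E} (hx : x ∈ Ω) (hy : y ∈ Ω) :
    ‖G x - G y‖ ^ 2 ≤ β * ⟪G x - G y, x - y⟫ := by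
  have key := inner_sub_add_two_mul_inner_add_mul_norm_sq_nonneg hΩo hΩ hG hGc hmono hup hx hy
    (-β⁻¹ • (G x - G y))
  rw [real_inner_smul_right, real_inner_self_eq_norm_sq, norm_smul, mul_pow, Real.norm_eq_abs,
    sq_abs, neg_sq] at key
  field_simp at key
  linarith

theorem ContDiffOn.continuousOn_gradient {f : E → ℝ} (hf : ContDiffOn ℝ 1 f Ω) (hΩ : IsOpen Ω) :
    ContinuousOn (gradient f) Ω :=
  (InnerProductSpace.toDual ℝ E).symm.continuous.comp_continuousOn
    (hf.continuousOn_fderiv_of_isOpen hΩ le_rfl)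

end InnerProduct

theorem convexity_difference_iff_cocoercive_general
    {n : ℕ} (Ω : Set (EuclideanSpace ℝ (Fin n)))
    (hΩopen : IsOpen Ω) (hΩconv : Convex ℝ Ω)
    (f : EuclideanSpace ℝ (Fin n) → ℝ)
    (hconv : ConvexOn ℝ Ω f)
    (hf : ContDiffOn ℝ 1 f Ω)
    (β : ℝ) (hβ : 0 < β) :
    ConvexOn ℝ Ω (fun x => β / 2 * ‖x‖ ^ 2 - f x) ↔
      (∀ x ∈ Ω, ∀ y ∈ Ω,
        β * ⟪gradient f x - gradient f y, x - y⟫ ≥ ‖gradient f x - gradient f y‖ ^ 2) := by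
  have hG : ∀ x ∈ Ω, HasGradientAt f (gradient f x) x := fun x hx =>
    ((hf.differentiableOn one_ne_zero).differentiableAt (hΩopen.mem_nhds hx)).hasGradientAt
  rw [convexOn_half_mul_norm_sq_sub_iff hΩconv fun x hx => (hG x hx).differentiableAt]
  constructor
  · intro hup x hx y hy
    exact norm_sq_sub_le_mul_inner_sub hβ hΩopen hΩconv hG (hf.continuousOn_gradient hΩopen)
      (fun a ha b hb => hconv.inner_sub_nonneg_of_hasGradientAt hG ha hb) hup hx hy
  · intro hco x hx y hy
    exact real_inner_le_mul_norm_sq_of_norm_sq_le hβ.le (hco x hx y hy)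

theorem convexity_difference_iff_cocoercive
    {n : ℕ} (Ω : Set (EuclideanSpace ℝ (Fin n)))
    (hΩne : Ω.Nonempty) (hΩopen : IsOpen Ω) (hΩconv : Convex ℝ Ω)
    (f : EuclideanSpace ℝ (Fin n) → ℝ)
    (hconv : ConvexOn ℝ Ω f)
    (hf : ContDiffOn ℝ 1 f Ω)
    (hloc : ∀ x ∈ Ω, ∃ s ∈ nhds x, ∃ K : NNReal, LipschitzOnWith K (gradient f) s)
    (β : ℝ) (hβ : 0 < β) :
    ConvexOn ℝ Ω (fun x => β / 2 * ‖x‖ ^ 2 - f x) ↔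
      (∀ x ∈ Ω, ∀ y ∈ Ω,
        β * ⟪gradient f x - gradient f y, x - y⟫ ≥ ‖gradient f x - gradient f y‖ ^ 2) :=
  convexity_difference_iff_cocoercive_general Ω hΩopen hΩconv f hconv hf β hβ
end

section
/- Let Ω ⊆ ℝⁿ be a nonempty open convex set, f : Ω → ℝ a convex C¹ function with locally Lipschitz gradient, and β > 0. Then ∇f is β-Lipschitz on Ω if and only if ∇f is 1/β-cocoercive on Ω. -/
/-!
Cocoercivity gives the Lipschitz bound by Cauchy–Schwarz. Conversely, write `w = ∇f b - ∇f a`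
and `z = b - β⁻¹ w`. The gradient inequality of the convex function at `a` and the descent lemma
at `b`, both evaluated at `z`, give `f a + ⟪∇f a, b - a⟫ + ‖w‖² / (2β) ≤ f b`; adding the same
bound with `a` and `b` swapped gives cocoercivity at `(a, b)`. The point `z` must lie in `Ω`,
which holds when `a` and `b` are close compared with their distance to the boundary. For general
`x, y ∈ Ω`, cut the segment into `N` equal pieces that short: the gradient increments `vᵢ` along
it telescope to `∇f y - ∇f x`, and `‖∑ vᵢ‖² ≤ N ∑ ‖vᵢ‖²` turns the local inequalities into the
global one.
-/

open scoped RealInnerProductSpace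
open AffineMap Metric Set

variable {E : Type*} [NormedAddCommGroup E] [InnerProductSpace ℝ E]

lemma lineMap_sub_lineMap (x y : E) (s t : ℝ) :
    lineMap x y s - lineMap x y t = (s - t) • (y - x) := by
  simp only [lineMap_apply_module', sub_smul]
  abel

lemma norm_le_mul_norm_of_sq_norm_le_mul_inner {w d : E} {β : ℝ} (hβ : 0 ≤ β)
    (h : ‖w‖ ^ 2 ≤ β * ⟪w, d⟫) : ‖w‖ ≤ β * ‖d‖ := by
  have hcs : ‖w‖ * ‖w‖ ≤ ‖w‖ * (β * ‖d‖) := by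
    linarith [mul_le_mul_of_nonneg_left (real_inner_le_norm w d) hβ]
  rcases (norm_nonneg w).eq_or_lt with hw | hw
  · rw [← hw]; positivity
  · exact le_of_mul_le_mul_left hcs hw

lemma sq_norm_sub_le_mul_inner_of_lineMap_steps (g : E → E) {β : ℝ} {x y : E} {N : ℕ}
    (hN : 0 < N)
    (hstep : ∀ i < N, let p : ℕ → E := fun j => lineMap x y ((j : ℝ) / N)
      ‖g (p (i + 1)) - g (p i)‖ ^ 2 ≤ β * ⟪g (p (i + 1)) - g (p i), p (i + 1) - p i⟫) :
    ‖g y - g x‖ ^ 2 ≤ β * ⟪g y - g x, y - x⟫ := by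
  set p : ℕ → E := fun j => lineMap x y ((j : ℝ) / N)
  set v : ℕ → E := fun i => g (p (i + 1)) - g (p i)
  have hNR : (0 : ℝ) < N := Nat.cast_pos.mpr hN
  have hp_step (i : ℕ) : p (i + 1) - p i = (N : ℝ)⁻¹ • (y - x) := by
    simp only [p, lineMap_sub_lineMap]
    congr 1
    push_cast
    ring
  have htelescope : ∑ i ∈ Finset.range N, v i = g y - g x := by
    rw [Finset.sum_range_sub (fun i => g (p i))]
    simp [p, hNR.ne']
  calc ‖g y - g x‖ ^ 2 ≤ (∑ i ∈ Finset.range N, ‖v i‖) ^ 2 := by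
        rw [← htelescope]
        gcongr
        exact norm_sum_le _ _
    _ ≤ N * ∑ i ∈ Finset.range N, ‖v i‖ ^ 2 := by
        simpa using sq_sum_le_card_mul_sum_sq (s := Finset.range N) (f := fun i => ‖v i‖)
    _ ≤ N * ∑ i ∈ Finset.range N, β * ⟪v i, (N : ℝ)⁻¹ • (y - x)⟫ := by
        gcongr with i hi
        rw [← hp_step]
        exact hstep i (Finset.mem_range.mp hi)
    _ = β * ⟪g y - g x, y - x⟫ := by
        simp only [real_inner_smul_right, ← Finset.mul_sum, ← sum_inner, htelescope]
        field_simp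

variable [CompleteSpace E]
  {f : E → ℝ} {Ω : Set E} {β : ℝ}

lemma hasDerivAt_comp_lineMap {a b : E} {t : ℝ} (hf : DifferentiableAt ℝ f (lineMap a b t)) :
    HasDerivAt (fun s : ℝ => f (lineMap a b s)) ⟪gradient f (lineMap a b t), b - a⟫ t :=
  (hasGradientAt_iff_hasFDerivAt.mp hf.hasGradientAt).comp_hasDerivAt t hasDerivAt_lineMap

lemma ConvexOn.add_inner_gradient_le (hconv : ConvexOn ℝ Ω f) {u w : E} (hu : u ∈ Ω)
    (hw : w ∈ Ω) (hf : DifferentiableAt ℝ f u) : f u + ⟪gradient f u, w - u⟫ ≤ f w := by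
  have hline : ConvexOn ℝ (lineMap u w ⁻¹' Ω) (fun s : ℝ => f (lineMap u w s)) :=
    hconv.comp_affineMap (lineMap u w)
  have hderiv := hasDerivAt_comp_lineMap (a := u) (b := w) (t := 0) (by rwa [lineMap_apply_zero])
  have hslope := hline.le_slope_of_hasDerivAt (by simpa) (by simpa) one_pos hderiv
  simp only [slope_def_field, lineMap_apply_zero, lineMap_apply_one, sub_zero, div_one] at hslope
  linarith

lemma Convex.le_add_inner_gradient_add_sq (hΩ : Convex ℝ Ω)
    (hf : ∀ z ∈ Ω, DifferentiableAt ℝ f z)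
    (hlip : ∀ x ∈ Ω, ∀ y ∈ Ω, ‖gradient f x - gradient f y‖ ≤ β * ‖x - y‖) {u w : E} (hu : u ∈ Ω)
    (hw : w ∈ Ω) : f w ≤ f u + ⟪gradient f u, w - u⟫ + β / 2 * ‖w - u‖ ^ 2 := by
  have hmem (t : ℝ) (ht : t ∈ Icc 0 1) : lineMap u w t ∈ Ω := hΩ.lineMap_mem hu hw ht
  have hderiv (t : ℝ) (ht : t ∈ Icc 0 1) :
      HasDerivAt (fun s : ℝ => f (lineMap u w s)) ⟪gradient f (lineMap u w t), w - u⟫ t :=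
    hasDerivAt_comp_lineMap (hf _ (hmem t ht))
  have hbound (t : ℝ) (ht : t ∈ Ico 0 1) :
      ⟪gradient f (lineMap u w t), w - u⟫ ≤ ⟪gradient f u, w - u⟫ + β * t * ‖w - u‖ ^ 2 := by
    have hlip_t : ‖gradient f (lineMap u w t) - gradient f u‖ ≤ β * (t * ‖w - u‖) := by
      have := hlip _ (hmem t (Ico_subset_Icc_self ht)) u hu
      rwa [← vsub_eq_sub (lineMap u w t) u, lineMap_vsub_left, vsub_eq_sub, norm_smul,
        Real.norm_of_nonneg ht.1] at this
    have := real_inner_le_norm (gradient f (lineMap u w t) - gradient f u) (w - u)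
    rw [inner_sub_left] at this
    nlinarith [norm_nonneg (w - u)]
  have hquad (t : ℝ) :
      HasDerivAt (fun s : ℝ => f u + s * ⟪gradient f u, w - u⟫ + β / 2 * s ^ 2 * ‖w - u‖ ^ 2)
        (⟪gradient f u, w - u⟫ + β * t * ‖w - u‖ ^ 2) t := by
    have hsq : HasDerivAt (fun s : ℝ => s ^ 2) (2 * t) t := by simpa using hasDerivAt_pow 2 t
    refine ((((hasDerivAt_id t).mul_const ⟪gradient f u, w - u⟫).const_add (f u)).add
      ((hsq.const_mul (β / 2)).mul_const (‖w - u‖ ^ 2))).congr_deriv ?_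
    ring
  have := image_le_of_deriv_right_le_deriv_boundary
    (fun t ht => (hderiv t ht).continuousAt.continuousWithinAt)
    (fun t ht => (hderiv t (Ico_subset_Icc_self ht)).hasDerivWithinAt)
    (by simp) (fun t _ => (hquad t).continuousAt.continuousWithinAt)
    (fun t _ => (hquad t).hasDerivWithinAt) hbound (right_mem_Icc.mpr zero_le_one)
  simpa using this

lemma ConvexOn.add_inner_gradient_add_sq_le (hconv : ConvexOn ℝ Ω f)
    (hf : ∀ z ∈ Ω, DifferentiableAt ℝ f z)
    (hlip : ∀ x ∈ Ω, ∀ y ∈ Ω, ‖gradient f x - gradient f y‖ ≤ β * ‖x - y‖) {a b : E}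
    (ha : a ∈ Ω) (hb : b ∈ Ω) (hz : b - β⁻¹ • (gradient f b - gradient f a) ∈ Ω) :
    f a + ⟪gradient f a, b - a⟫ + (2 * β)⁻¹ * ‖gradient f b - gradient f a‖ ^ 2 ≤ f b := by
  set w := gradient f b - gradient f a
  set z := b - β⁻¹ • w
  have hlower := hconv.add_inner_gradient_le ha hz (hf a ha)
  have hupper := hconv.1.le_add_inner_gradient_add_sq hf hlip hb hz
  have hza : z - a = (b - a) - β⁻¹ • w := by simp only [z]; abel
  have hzb : z - b = -(β⁻¹ • w) := by simp only [z]; abel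
  rw [hza, inner_sub_right, real_inner_smul_right] at hlower
  rw [hzb, inner_neg_right, real_inner_smul_right, norm_neg, norm_smul, Real.norm_eq_abs,
    mul_pow, sq_abs] at hupper
  have hw : ⟪gradient f b, w⟫ - ⟪gradient f a, w⟫ = ‖w‖ ^ 2 := by
    rw [← inner_sub_left, real_inner_self_eq_norm_sq]
  have hinv : β⁻¹ * β * β⁻¹ = β⁻¹ := by simpa only [inv_inv] using mul_inv_mul_cancel β⁻¹
  linear_combination hlower + hupper - β⁻¹ * hw + (‖w‖ ^ 2 / 2) * hinv

lemma ConvexOn.sq_norm_gradient_sub_le_mul_inner_of_closedBall_subset (hconv : ConvexOn ℝ Ω f)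
    (hf : ∀ z ∈ Ω, DifferentiableAt ℝ f z) (hβ : 0 < β)
    (hlip : ∀ x ∈ Ω, ∀ y ∈ Ω, ‖gradient f x - gradient f y‖ ≤ β * ‖x - y‖) {a b : E}
    (ha : closedBall a (dist a b) ⊆ Ω) (hb : closedBall b (dist a b) ⊆ Ω) :
    ‖gradient f b - gradient f a‖ ^ 2 ≤ β * ⟪gradient f b - gradient f a, b - a⟫ := by
  have hlower {x y : E} (hx : x ∈ Ω) (hy : y ∈ Ω) (hball : closedBall y (dist x y) ⊆ Ω) :
      f x + ⟪gradient f x, y - x⟫ + (2 * β)⁻¹ * ‖gradient f y - gradient f x‖ ^ 2 ≤ f y := by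
    refine hconv.add_inner_gradient_add_sq_le hf hlip hx hy (hball ?_)
    rw [mem_closedBall, dist_eq_norm, sub_sub_cancel_left, norm_neg, norm_smul,
      Real.norm_of_nonneg (inv_nonneg.mpr hβ.le), inv_mul_le_iff₀ hβ, dist_eq_norm,
      norm_sub_rev x]
    exact hlip y hy x hx
  have hab := hlower (ha (mem_closedBall_self dist_nonneg))
    (hb (mem_closedBall_self dist_nonneg)) hb
  have hba := hlower (hb (mem_closedBall_self dist_nonneg))
    (ha (mem_closedBall_self dist_nonneg)) (dist_comm a b ▸ ha)
  rw [norm_sub_rev] at hba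
  rw [← inv_mul_le_iff₀ hβ, inner_sub_left]
  rw [← neg_sub b a, inner_neg_right] at hba
  linear_combination hab + hba

lemma ConvexOn.sq_norm_gradient_sub_le_mul_inner (hΩ : IsOpen Ω) (hconv : ConvexOn ℝ Ω f)
    (hf : ∀ z ∈ Ω, DifferentiableAt ℝ f z) (hβ : 0 < β)
    (hlip : ∀ x ∈ Ω, ∀ y ∈ Ω, ‖gradient f x - gradient f y‖ ≤ β * ‖x - y‖) {x y : E}
    (hx : x ∈ Ω) (hy : y ∈ Ω) :
    ‖gradient f y - gradient f x‖ ^ 2 ≤ β * ⟪gradient f y - gradient f x, y - x⟫ := by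
  have hsegment : IsCompact (lineMap x y '' Icc (0 : ℝ) 1) :=
    isCompact_Icc.image lineMap_continuous
  obtain ⟨δ, hδ, hδΩ⟩ := hsegment.exists_cthickening_subset_open hΩ
    (image_subset_iff.mpr fun t ht => hconv.1.lineMap_mem hx hy ht)
  obtain ⟨N, hN⟩ := exists_nat_gt (dist x y / δ)
  have hN0 : 0 < N := by exact_mod_cast (div_nonneg dist_nonneg hδ.le).trans_lt hN
  refine sq_norm_sub_le_mul_inner_of_lineMap_steps _ hN0 fun i hi => ?_
  intro p
  have hstep : dist (p i) (p (i + 1)) ≤ δ := by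
    have hNR : (0 : ℝ) < N := by exact_mod_cast hN0
    have : dist (p i) (p (i + 1)) = dist x y / N := by
      simp only [p, dist_lineMap_lineMap, Real.dist_eq]
      rw [← sub_div, Nat.cast_succ, sub_add_cancel_left, abs_div, abs_neg, abs_one, Nat.abs_cast]
      ring
    rw [this, div_le_iff₀ hNR]
    rw [div_lt_iff₀ hδ] at hN
    linarith
  have hball (j : ℕ) (hj : j ≤ N) : closedBall (p j) (dist (p i) (p (i + 1))) ⊆ Ω := by
    have hpj : p j ∈ lineMap x y '' Icc (0 : ℝ) 1 :=
      ⟨(j : ℝ) / N, ⟨by positivity, div_le_one_of_le₀ (by exact_mod_cast hj) (by positivity)⟩, rfl⟩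
    exact (closedBall_subset_closedBall hstep).trans
      ((closedBall_subset_cthickening hpj δ).trans hδΩ)
  exact hconv.sq_norm_gradient_sub_le_mul_inner_of_closedBall_subset hf hβ hlip (hball i hi.le)
    (hball (i + 1) hi)

theorem grad_lipschitz_iff_cocoercive_finiteDim_general
    {n : ℕ} (Ω : Set (EuclideanSpace ℝ (Fin n)))
    (hΩopen : IsOpen Ω)
    (f : EuclideanSpace ℝ (Fin n) → ℝ)
    (hconv : ConvexOn ℝ Ω f)
    (hf : ContDiffOn ℝ 1 f Ω)
    (β : ℝ) (hβ : 0 < β) :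
    (∀ x ∈ Ω, ∀ y ∈ Ω, ‖gradient f x - gradient f y‖ ≤ β * ‖x - y‖) ↔
      (∀ x ∈ Ω, ∀ y ∈ Ω,
        β * ⟪gradient f x - gradient f y, x - y⟫ ≥ ‖gradient f x - gradient f y‖ ^ 2) := by
  have hdiff : ∀ z ∈ Ω, DifferentiableAt ℝ f z := fun z hz =>
    (hf.contDiffAt (hΩopen.mem_nhds hz)).differentiableAt one_ne_zero
  constructor
  · intro hlip x hx y hy
    exact hconv.sq_norm_gradient_sub_le_mul_inner hΩopen hdiff hβ hlip hy hx
  · intro hcoco x hx y hy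
    exact norm_le_mul_norm_of_sq_norm_le_mul_inner hβ.le (hcoco x hx y hy)

theorem grad_lipschitz_iff_cocoercive_finiteDim
    {n : ℕ} (Ω : Set (EuclideanSpace ℝ (Fin n)))
    (hΩne : Ω.Nonempty) (hΩopen : IsOpen Ω) (hΩconv : Convex ℝ Ω)
    (f : EuclideanSpace ℝ (Fin n) → ℝ)
    (hconv : ConvexOn ℝ Ω f)
    (hf : ContDiffOn ℝ 1 f Ω)
    (hloc : ∀ x ∈ Ω, ∃ s ∈ nhds x, ∃ K : NNReal, LipschitzOnWith K (gradient f) s)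
    (β : ℝ) (hβ : 0 < β) :
    (∀ x ∈ Ω, ∀ y ∈ Ω, ‖gradient f x - gradient f y‖ ≤ β * ‖x - y‖) ↔
      (∀ x ∈ Ω, ∀ y ∈ Ω,
        β * ⟪gradient f x - gradient f y, x - y⟫ ≥ ‖gradient f x - gradient f y‖ ^ 2) :=
  grad_lipschitz_iff_cocoercive_finiteDim_general Ω hΩopen f hconv hf β hβ
end

section
/- Let Ω ⊆ ℝⁿ be a nonempty open convex set, f : Ω → ℝ convex, and β > 0. If the function h(x) := (β/2)‖x‖² − f(x) is convex on Ω, then f is differentiable at every point of Ω. -/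
/-!
The function `h = β/2 ‖·‖² - f` is convex, hence continuous, on the open set `Ω`, so a supporting
hyperplane of its strict epigraph at `(x, h x)` gives a subgradient `w`. Rewriting
`h y ≥ h x + w (y - x)` yields the quadratic upper bound
`f y ≤ f x + (β ⟪x, ·⟫ - w) (y - x) + β/2 ‖y - x‖²`, and convexity of `f` at the midpoint `x`
of `y` and `2x - y` mirrors it into the matching lower bound, so `f` is differentiable at `x`
with derivative `β ⟪x, ·⟫ - w`.
-/

open Filter Topology Asymptotics

theorem ConvexOn.exists_subgradient_of_continuousOn
    {E : Type*} [NormedAddCommGroup E] [NormedSpace ℝ E] {s : Set E} {f : E → ℝ}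
    (hf : ConvexOn ℝ s f) (hs : IsOpen s) (hfc : ContinuousOn f s) {x : E} (hx : x ∈ s) :
    ∃ g : StrongDual ℝ E, ∀ y ∈ s, f x + g (y - x) ≤ f y := by
  set U : Set (E × ℝ) := {p | p.1 ∈ s ∧ f p.1 < p.2}
  have hU : IsOpen U := by
    have : ContinuousOn (fun p : E × ℝ => p.2 - f p.1) (Prod.fst ⁻¹' s) :=
      continuousOn_snd.sub (hfc.comp continuousOn_fst fun _ hp => hp)
    convert this.isOpen_inter_preimage (hs.preimage continuous_fst) (isOpen_Ioi (a := 0)) using 1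
    ext p
    simp [U, sub_pos]
  obtain ⟨φ, hφ⟩ := geometric_hahn_banach_open_point hf.convex_strict_epigraph hU
    (x := (x, f x)) fun h => lt_irrefl _ h.2
  set c := φ (0, 1)
  have hφ_apply : ∀ y t, φ (y, t) = φ (y, 0) + t * c := by
    intro y t
    rw [show ((y, t) : E × ℝ) = (y, 0) + t • (0, 1) by simp, map_add, map_smul, smul_eq_mul]
  -- the separating hyperplane is not vertical
  have hc : c < 0 := by
    have := hφ (x, f x + 1) ⟨hx, lt_add_one _⟩
    rw [hφ_apply, hφ_apply x (f x)] at this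
    linarith
  refine ⟨(-c⁻¹) • φ.comp (ContinuousLinearMap.inl ℝ E ℝ), fun y hy => ?_⟩
  have hsupport : φ (y, 0) + c * f y ≤ φ (x, 0) + c * f x := by
    by_contra! hlt
    set D := φ (y, 0) + c * f y - (φ (x, 0) + c * f x)
    have := hφ (y, f y - D / c) ⟨hy, lt_sub_right_of_add_lt (by
      simpa using div_neg_of_pos_of_neg (sub_pos.2 hlt) hc)⟩
    rw [hφ_apply, hφ_apply x (f x), sub_mul, div_mul_cancel₀ _ hc.ne] at this
    linarith
  have hsub : φ (y - x, 0) = φ (y, 0) - φ (x, 0) := by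
    rw [← map_sub, Prod.mk_sub_mk, sub_zero]
  simp only [smul_apply, ContinuousLinearMap.comp_apply,
    ContinuousLinearMap.inl_apply, hsub, smul_eq_mul]
  have : -c⁻¹ * (φ (y, 0) - φ (x, 0)) ≤ f y - f x := by
    rw [neg_mul, neg_le, ← div_eq_inv_mul, le_div_iff_of_neg hc]
    linarith
  linarith

theorem ConvexOn.hasFDerivAt_of_eventually_le_add_norm_sq
    {E : Type*} [NormedAddCommGroup E] [NormedSpace ℝ E] {s : Set E} {f : E → ℝ} {x : E}
    {ℓ : StrongDual ℝ E} {C : ℝ} (hf : ConvexOn ℝ s f) (hs : s ∈ 𝓝 x)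
    (hle : ∀ᶠ h in 𝓝 0, f (x + h) ≤ f x + ℓ h + C * ‖h‖ ^ 2) :
    HasFDerivAt f ℓ x := by
  have hmem : ∀ᶠ h in 𝓝 (0 : E), x + h ∈ s :=
    (continuous_const_add x).tendsto' 0 x (add_zero x) hs
  have hneg {p : E → Prop} (hp : ∀ᶠ h in 𝓝 (0 : E), p h) : ∀ᶠ h in 𝓝 (0 : E), p (-h) :=
    (continuous_neg.tendsto' 0 0 neg_zero).eventually hp
  rw [hasFDerivAt_iff_isLittleO_nhds_zero]
  refine IsBigO.trans_isLittleO (g := fun h => ‖h‖ ^ 2) ?_ (isLittleO_norm_pow_id one_lt_two)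
  refine IsBigO.of_bound C ?_
  filter_upwards [hle, hneg hle, hmem, hneg hmem] with h hup hup' hxh hxh'
  have hmid := hf.2 hxh hxh' (by norm_num : (0 : ℝ) ≤ 1 / 2) (by norm_num : (0 : ℝ) ≤ 1 / 2)
    (by norm_num)
  rw [show (1 / 2 : ℝ) • (x + h) + (1 / 2 : ℝ) • (x + -h) = x by module, smul_eq_mul,
    smul_eq_mul] at hmid
  rw [map_neg, norm_neg] at hup'
  rw [Real.norm_eq_abs, norm_pow, norm_norm, abs_le]
  constructor <;> linarith

theorem convexity_difference_implies_differentiable_general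
    {n : ℕ} (Ω : Set (EuclideanSpace ℝ (Fin n)))
    (hΩopen : IsOpen Ω)
    (f : EuclideanSpace ℝ (Fin n) → ℝ)
    (hconv : ConvexOn ℝ Ω f)
    (β : ℝ)
    (hh : ConvexOn ℝ Ω (fun x => β / 2 * ‖x‖ ^ 2 - f x)) :
    ∀ x ∈ Ω, DifferentiableAt ℝ f x := by
  intro x hx
  obtain ⟨w, hw⟩ := hh.exists_subgradient_of_continuousOn hΩopen (hh.continuousOn hΩopen) hx
  refine (hconv.hasFDerivAt_of_eventually_le_add_norm_sq (ℓ := β • innerSL ℝ x - w)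
    (C := β / 2) (hΩopen.mem_nhds hx) ?_).differentiableAt
  filter_upwards [(continuous_const_add x).tendsto' 0 x (add_zero x) (hΩopen.mem_nhds hx)]
    with d hd
  have hsub := hw (x + d) hd
  have hnorm := norm_add_sq_real x d
  rw [add_sub_cancel_left, hnorm] at hsub
  simp only [sub_apply, smul_apply, innerSL_apply_apply, smul_eq_mul]
  linarith

theorem convexity_difference_implies_differentiable
    {n : ℕ} (Ω : Set (EuclideanSpace ℝ (Fin n)))
    (hΩne : Ω.Nonempty) (hΩopen : IsOpen Ω) (hΩconv : Convex ℝ Ω)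
    (f : EuclideanSpace ℝ (Fin n) → ℝ)
    (hconv : ConvexOn ℝ Ω f)
    (β : ℝ) (hβ : 0 < β)
    (hh : ConvexOn ℝ Ω (fun x => β / 2 * ‖x‖ ^ 2 - f x)) :
    ∀ x ∈ Ω, DifferentiableAt ℝ f x :=
  convexity_difference_implies_differentiable_general Ω hΩopen f hconv β hh
end

section
/- Let Ω ⊆ ℝⁿ be open convex, f : Ω → ℝ convex and differentiable on Ω, and β > 0. Suppose (β/2)‖x − y‖² ≥ D_f(x, y) ≥ 0 for all x, y ∈ Ω, where D_f(x, y) := f(x) − f(y) − ⟨∇f(y), x − y⟩. Then for every x̄ ∈ Ω, ∇f is Lipschitz on a neighborhood of x̄; consequently f ∈ C^{1,+}(Ω). -/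
/-!
For `x, y` near `x̄`, test the lower bound `D(z, y) ≥ 0` at the gradient-type step
`z = x - t (∇f(x) - ∇f(y))`: the three-point identity and the upper bound at `(z, x)` and
`(x, y)` give `t ‖∇f(x) - ∇f(y)‖² ≤ β ‖x - y‖²` for `β t ≤ 1`. Choosing `t`
as large as allowed while keeping `z` in a ball inside `Ω` yields
`‖∇f(x) - ∇f(y)‖ ≤ 2 β ‖x - y‖` on a smaller ball.
-/

open scoped RealInnerProductSpace

section Bregman

variable {E : Type*} [NormedAddCommGroup E] [InnerProductSpace ℝ E]

def bregmanDist (f : E → ℝ) (g : E → E) (x y : E) : ℝ :=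
  f x - f y - ⟪g y, x - y⟫

theorem bregmanDist_three_point (f : E → ℝ) (g : E → E) (x y z : E) :
    bregmanDist f g z y =
      bregmanDist f g z x + bregmanDist f g x y + ⟪g x - g y, z - x⟫ := by
  simp only [bregmanDist, inner_sub_left, inner_sub_right]
  ring

def BregmanSandwichOn (β : ℝ) (f : E → ℝ) (g : E → E) (Ω : Set E) : Prop :=
  ∀ x ∈ Ω, ∀ y ∈ Ω, 0 ≤ bregmanDist f g x y ∧ bregmanDist f g x y ≤ β / 2 * ‖x - y‖ ^ 2

theorem sub_mem_ball_two_mul {F : Type*} [SeminormedAddCommGroup F] {x₀ x v : F} {δ : ℝ}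
    (hx : x ∈ Metric.ball x₀ δ) (hv : ‖v‖ ≤ δ) : x - v ∈ Metric.ball x₀ (2 * δ) := by
  rw [Metric.mem_ball, dist_eq_norm, sub_right_comm] at *
  linarith [norm_sub_le (x - x₀) v]

variable {Ω : Set E} {f : E → ℝ} {g : E → E} {β : ℝ}

/- With `u = g x - g y` and `z = x - t • u`, the three-point identity gives
`0 ≤ D(z, y) = D(z, x) + D(x, y) - t‖u‖² ≤ (β t² / 2)‖u‖² + (β / 2)‖x - y‖² - t‖u‖²`,
and `β t ≤ 1` absorbs the first term. -/
theorem BregmanSandwichOn.mul_norm_sub_sq_le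
    (hB : BregmanSandwichOn β f g Ω)
    {x y : E} (hx : x ∈ Ω) (hy : y ∈ Ω) {t : ℝ} (ht : 0 ≤ t) (hβt : β * t ≤ 1)
    (hz : x - t • (g x - g y) ∈ Ω) :
    t * ‖g x - g y‖ ^ 2 ≤ β * ‖x - y‖ ^ 2 := by
  set u := g x - g y
  set z := x - t • u
  have hzsub : z - x = -(t • u) := sub_sub_cancel_left x _
  have hnorm : ‖z - x‖ = t * ‖u‖ := by
    rw [hzsub, norm_neg, norm_smul, Real.norm_of_nonneg ht]
  have hinner : ⟪u, z - x⟫ = -(t * ‖u‖ ^ 2) := by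
    rw [hzsub, inner_neg_right, real_inner_smul_right, real_inner_self_eq_norm_sq]
  have hthree := bregmanDist_three_point f g x y z
  have hlower_zy := (hB z hz y hy).1
  have hupper_zx := (hB z hz x hx).2
  have hupper_xy := (hB x hx y hy).2
  rw [hnorm] at hupper_zx
  rw [hinner] at hthree
  nlinarith [mul_nonneg (mul_nonneg (sub_nonneg.mpr hβt) ht) (sq_nonneg ‖u‖)]

theorem BregmanSandwichOn.lipschitzOnWith_ball
    (hB : BregmanSandwichOn β f g Ω)
    (hβ : 0 < β) {x₀ : E} {δ : ℝ} (hδ : 0 < δ) (hball : Metric.ball x₀ (2 * δ) ⊆ Ω) :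
    LipschitzOnWith (2 * β).toNNReal g (Metric.ball x₀ δ) := by
  refine LipschitzOnWith.of_dist_le' fun x hx y hy => ?_
  rw [dist_eq_norm, dist_eq_norm]
  have hsub : Metric.ball x₀ δ ⊆ Ω :=
    (Metric.ball_subset_ball (by linarith)).trans hball
  have hstep : ∀ t, 0 ≤ t → t * ‖g x - g y‖ ≤ δ → x - t • (g x - g y) ∈ Ω := fun t ht htM =>
    hball <| sub_mem_ball_two_mul hx <| by rwa [norm_smul, Real.norm_of_nonneg ht]
  have hd : ‖x - y‖ < 2 * δ := by
    rw [← dist_eq_norm, two_mul]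
    exact (dist_triangle_right x y x₀).trans_lt (add_lt_add hx hy)
  set M := ‖g x - g y‖
  -- Step length `min (1 / β) (δ / M)`: the step stays in the ball, and in the second case
  -- `δ M ≤ β ‖x - y‖² < 2 β δ ‖x - y‖` is what produces the constant `2 β`.
  rcases le_or_gt M (β * δ) with hM | hM
  · have key := hB.mul_norm_sub_sq_le (hsub hx) (hsub hy) (inv_nonneg.mpr hβ.le)
      (mul_inv_cancel₀ hβ.ne').le
      (hstep _ (inv_nonneg.mpr hβ.le) (by rw [inv_mul_le_iff₀ hβ]; linarith))
    have hsq : M ^ 2 ≤ (β * ‖x - y‖) ^ 2 := by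
      rw [inv_mul_le_iff₀ hβ] at key; linarith
    have := (pow_le_pow_iff_left₀ (norm_nonneg _) (by positivity) two_ne_zero).mp hsq
    linarith [mul_nonneg hβ.le (norm_nonneg (x - y))]
  · have hMpos : 0 < M := (mul_pos hβ hδ).trans hM
    have key := hB.mul_norm_sub_sq_le (hsub hx) (hsub hy) (t := δ / M)
      (by positivity) (by rw [mul_div_assoc']; exact (div_le_one hMpos).mpr hM.le)
      (hstep _ (by positivity) (div_mul_cancel₀ δ hMpos.ne').le)
    rw [div_mul_eq_mul_div, div_le_iff₀ hMpos, sq M, ← mul_assoc] at key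
    have hδM : δ * M ≤ δ * (2 * β * ‖x - y‖) := by
      nlinarith [le_of_mul_le_mul_right key hMpos,
        mul_le_mul_of_nonneg_left hd.le (mul_nonneg hβ.le (norm_nonneg (x - y)))]
    exact le_of_mul_le_mul_left hδM hδ

end Bregman

theorem bregman_bound_implies_locally_lipschitz_gradient_general
    {n : ℕ} (Ω : Set (EuclideanSpace ℝ (Fin n)))
    (hΩopen : IsOpen Ω)
    (f : EuclideanSpace ℝ (Fin n) → ℝ)
    (g : EuclideanSpace ℝ (Fin n) → EuclideanSpace ℝ (Fin n))
    (β : ℝ) (hβ : 0 < β)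
    (hBregman : ∀ x ∈ Ω, ∀ y ∈ Ω,
      0 ≤ f x - f y - ⟪g y, x - y⟫ ∧
      f x - f y - ⟪g y, x - y⟫ ≤ β / 2 * ‖x - y‖ ^ 2) :
    ∀ x ∈ Ω, ∃ s ∈ nhds x, ∃ K : NNReal, LipschitzOnWith K g s := by
  intro x₀ hx₀
  obtain ⟨ε, hε, hball⟩ := Metric.isOpen_iff.mp hΩopen x₀ hx₀
  have hsandwich : BregmanSandwichOn β f g Ω := hBregman
  exact ⟨Metric.ball x₀ (ε / 2), Metric.ball_mem_nhds x₀ (half_pos hε), _,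
    hsandwich.lipschitzOnWith_ball hβ (half_pos hε) (by rwa [mul_div_cancel₀ ε two_ne_zero])⟩

theorem bregman_bound_implies_locally_lipschitz_gradient
    {n : ℕ} (Ω : Set (EuclideanSpace ℝ (Fin n)))
    (hΩopen : IsOpen Ω) (hΩconv : Convex ℝ Ω)
    (f : EuclideanSpace ℝ (Fin n) → ℝ)
    (hconv : ConvexOn ℝ Ω f)
    (g : EuclideanSpace ℝ (Fin n) → EuclideanSpace ℝ (Fin n))
    (hg : ∀ x ∈ Ω, HasGradientAt f (g x) x)
    (β : ℝ) (hβ : 0 < β)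
    (hBregman : ∀ x ∈ Ω, ∀ y ∈ Ω,
      0 ≤ f x - f y - ⟪g y, x - y⟫ ∧
      f x - f y - ⟪g y, x - y⟫ ≤ β / 2 * ‖x - y‖ ^ 2) :
    ∀ x ∈ Ω, ∃ s ∈ nhds x, ∃ K : NNReal, LipschitzOnWith K g s :=
  bregman_bound_implies_locally_lipschitz_gradient_general Ω hΩopen f g β hβ hBregman
end

section
/- Let Ω ⊆ ℝⁿ be open convex, f : Ω → ℝ convex, differentiable, and let x, y ∈ Ω and t > 0 with βt < 2 be such that z := x + t(∇f(y) − ∇f(x)) ∈ Ω. If (β/2)‖u − v‖² ≥ D_f(u, v) for all u, v ∈ Ω (where D_f(u,v) = f(u) − f(v) − ⟨∇f(v), u − v⟩), then D_f(x, y) ≥ t(1 − βt/2)‖∇f(x) − ∇f(y)‖². -/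
open scoped RealInnerProductSpace

/-!
Put `z := x + t • (∇f y - ∇f x)`. The first-order convexity inequality at `y` bounds `f z` from
below by `f y + ⟪∇f y, z - y⟫`, the hypothesis on `D_f(z, x)` bounds it from above by
`f x + ⟪∇f x, z - x⟫ + β/2 ‖z - x‖²`; subtracting the two bounds gives
`D_f(x, y) ≥ ⟪∇f y - ∇f x, z - x⟫ - β/2 ‖z - x‖²`, which for this `z` is
`t (1 - βt/2) ‖∇f x - ∇f y‖²`.
-/

theorem ConvexOn.add_fderiv_sub_le {E : Type*} [NormedAddCommGroup E] [NormedSpace ℝ E]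
    {s : Set E} {f : E → ℝ} {f' : E →L[ℝ] ℝ} {y z : E}
    (hf : ConvexOn ℝ s f) (hy : y ∈ s) (hz : z ∈ s) (hf' : HasFDerivAt f f' y) :
    f y + f' (z - y) ≤ f z := by
  have hline : ConvexOn ℝ (Set.Icc 0 1) (f ∘ AffineMap.lineMap (k := ℝ) y z) :=
    (hf.comp_affineMap _).subset (hf.1.mapsTo_lineMap hy hz) (convex_Icc 0 1)
  have hderiv : HasDerivAt (f ∘ AffineMap.lineMap (k := ℝ) y z) (f' (z - y)) 0 := by
    refine hf'.comp_hasDerivAt_of_eq 0 AffineMap.hasDerivAt_lineMap ?_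
    simp
  have hslope := hline.le_slope_of_hasDerivAt (Set.left_mem_Icc.2 zero_le_one)
    (Set.right_mem_Icc.2 zero_le_one) one_pos hderiv
  simp only [slope_def_field, Function.comp_apply, AffineMap.lineMap_apply_zero,
    AffineMap.lineMap_apply_one, sub_zero, div_one] at hslope
  linarith

theorem ConvexOn.add_inner_gradient_sub_le {F : Type*} [NormedAddCommGroup F]
    [InnerProductSpace ℝ F] [CompleteSpace F] {s : Set F} {f : F → ℝ} {G y z : F}
    (hf : ConvexOn ℝ s f) (hy : y ∈ s) (hz : z ∈ s) (hG : HasGradientAt f G y) :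
    f y + ⟪G, z - y⟫ ≤ f z :=
  hf.add_fderiv_sub_le hy hz hG.hasFDerivAt

theorem bregman_ge_inner_sub_of_bregman_le {F : Type*} [NormedAddCommGroup F]
    [InnerProductSpace ℝ F] [CompleteSpace F] {s : Set F} {f : F → ℝ} {g : F → F} {β : ℝ}
    (hf : ConvexOn ℝ s f) (hg : ∀ u ∈ s, HasGradientAt f (g u) u)
    (hBregman : ∀ u ∈ s, ∀ v ∈ s, β / 2 * ‖u - v‖ ^ 2 ≥ f u - f v - ⟪g v, u - v⟫)
    {x y z : F} (hx : x ∈ s) (hy : y ∈ s) (hz : z ∈ s) :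
    f x - f y - ⟪g y, x - y⟫ ≥ ⟪g y - g x, z - x⟫ - β / 2 * ‖z - x‖ ^ 2 := by
  have hlower := hf.add_inner_gradient_sub_le hy hz (hg y hy)
  have hupper := hBregman z hz x hx
  have hsplit : ⟪g y, z - y⟫ = ⟪g y, x - y⟫ + ⟪g y, z - x⟫ := by
    rw [← inner_add_right, sub_add_sub_cancel']
  rw [inner_sub_left]
  linarith

theorem bregman_gradient_inequality_general
    {n : ℕ} (Ω : Set (EuclideanSpace ℝ (Fin n)))
    (f : EuclideanSpace ℝ (Fin n) → ℝ)
    (hconv : ConvexOn ℝ Ω f)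
    (g : EuclideanSpace ℝ (Fin n) → EuclideanSpace ℝ (Fin n))
    (hg : ∀ u ∈ Ω, HasGradientAt f (g u) u)
    (β t : ℝ)
    (x y : EuclideanSpace ℝ (Fin n)) (hx : x ∈ Ω) (hy : y ∈ Ω)
    (hz : x + t • (g y - g x) ∈ Ω)
    (hBregman : ∀ u ∈ Ω, ∀ v ∈ Ω, β / 2 * ‖u - v‖ ^ 2 ≥ f u - f v - ⟪g v, u - v⟫) :
    f x - f y - ⟪g y, x - y⟫ ≥ t * (1 - β * t / 2) * ‖g x - g y‖ ^ 2 := by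
  have key := bregman_ge_inner_sub_of_bregman_le hconv hg hBregman hx hy hz
  have hinner : ⟪g y - g x, x + t • (g y - g x) - x⟫ = t * ‖g x - g y‖ ^ 2 := by
    rw [add_sub_cancel_left, real_inner_smul_right, real_inner_self_eq_norm_sq, norm_sub_rev]
  have hnorm : ‖x + t • (g y - g x) - x‖ ^ 2 = t ^ 2 * ‖g x - g y‖ ^ 2 := by
    rw [add_sub_cancel_left, norm_smul, mul_pow, Real.norm_eq_abs, sq_abs, norm_sub_rev]
  rw [hinner, hnorm] at key
  linarith

theorem bregman_gradient_inequality
    {n : ℕ} (Ω : Set (EuclideanSpace ℝ (Fin n)))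
    (hΩopen : IsOpen Ω) (hΩconv : Convex ℝ Ω)
    (f : EuclideanSpace ℝ (Fin n) → ℝ)
    (hconv : ConvexOn ℝ Ω f)
    (g : EuclideanSpace ℝ (Fin n) → EuclideanSpace ℝ (Fin n))
    (hg : ∀ u ∈ Ω, HasGradientAt f (g u) u)
    (β t : ℝ) (hβ : 0 < β) (ht : 0 < t) (hβt : β * t < 2)
    (x y : EuclideanSpace ℝ (Fin n)) (hx : x ∈ Ω) (hy : y ∈ Ω)
    (hz : x + t • (g y - g x) ∈ Ω)
    (hBregman : ∀ u ∈ Ω, ∀ v ∈ Ω, β / 2 * ‖u - v‖ ^ 2 ≥ f u - f v - ⟪g v, u - v⟫) :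
    f x - f y - ⟪g y, x - y⟫ ≥ t * (1 - β * t / 2) * ‖g x - g y‖ ^ 2 :=
  bregman_gradient_inequality_general Ω f hconv g hg β t x y hx hy hz hBregman
end

section
/- Let H be a real Hilbert space, Ω ⊆ H nonempty open convex, f : Ω → ℝ convex and Gâteaux differentiable, and β > 0. If ∇f is β-Lipschitz on Ω, then ∇f is 1/β-cocoercive on Ω: β⟨∇f(x) − ∇f(y), x − y⟩ ≥ ‖∇f(x) − ∇f(y)‖² for all x, y ∈ Ω. -/
/-!
A gradient step from `u` of length `‖∇f u - ∇f w‖ / β` stays in the ball of radius `‖u - w‖`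
around `u`. Combining the descent lemma for that step with the supporting hyperplane at `w`
gives `f u ≥ f w + ⟪∇f w, u - w⟫ + ‖∇f u - ∇f w‖² / (2β)`, and adding this to the same bound
with `u, w` swapped gives cocoercivity for every pair whose balls fit in `Ω`.
The segment `[x, y]` is compact, so it keeps a uniform distance `δ` from the boundary of `Ω`;
cut it into `n` equal steps `e` with increments `Dᵢ` of the gradient. Then, by Cauchy–Schwarz,
`‖∑ Dᵢ‖² ≤ n ∑ ‖Dᵢ‖² ≤ n β ∑ ⟪Dᵢ, e⟫ = β ⟪∇f y - ∇f x, y - x⟫`.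
-/

open scoped RealInnerProductSpace

open Set Metric

def IsGateauxGradientOn {H : Type*} [NormedAddCommGroup H] [InnerProductSpace ℝ H]
    (f : H → ℝ) (g : H → H) (Ω : Set H) : Prop :=
  ∀ x ∈ Ω, ∀ v : H, HasDerivAt (fun t : ℝ => f (x + t • v)) ⟪g x, v⟫ 0

lemma le_add_add_half_of_hasDerivAt {φ ψ : ℝ → ℝ} {a L : ℝ}
    (hφ : ∀ t ∈ Icc (0 : ℝ) 1, HasDerivAt φ (ψ t) t) (hψ : ∀ t ∈ Icc (0 : ℝ) 1, ψ t ≤ a + L * t) :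
    φ 1 ≤ φ 0 + a + L / 2 := by
  have hB : ∀ t, HasDerivAt (fun t => φ 0 + a * t + L / 2 * t ^ 2) (a + L * t) t := fun t => by
    refine ((((hasDerivAt_id t).const_mul a).const_add (φ 0)).add
      ((hasDerivAt_pow 2 t).const_mul (L / 2))).congr_deriv ?_
    simp only [mul_one, Nat.cast_ofNat]
    ring
  have := image_le_of_deriv_right_le_deriv_boundary (a := 0) (b := 1)
    (fun t ht => (hφ t ht).continuousAt.continuousWithinAt)
    (fun t ht => (hφ t (Ico_subset_Icc_self ht)).hasDerivWithinAt) (by simp)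
    (fun t _ => (hB t).continuousAt.continuousWithinAt) (fun t _ => (hB t).hasDerivWithinAt)
    (fun t ht => hψ t (Ico_subset_Icc_self ht)) (right_mem_Icc.2 zero_le_one)
  simpa using this

lemma ConvexOn.add_le_of_hasDerivAt_line {E : Type*} [AddCommGroup E] [Module ℝ E]
    {s : Set E} {f : E → ℝ} {u w : E} {c : ℝ} (hf : ConvexOn ℝ s f) (hw : w ∈ s) (hu : u ∈ s)
    (hd : HasDerivAt (fun t : ℝ => f (w + t • (u - w))) c 0) :
    f w + c ≤ f u := by
  have hline : (fun t : ℝ => f (w + t • (u - w))) = f ∘ AffineMap.lineMap w u := by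
    funext t
    simp [AffineMap.lineMap_apply_module', add_comm]
  rw [hline] at hd
  have := (hf.comp_affineMap (AffineMap.lineMap w u)).le_slope_of_hasDerivAt
    (by simpa using hw) (by simpa using hu) zero_lt_one hd
  simp only [slope_def_field, Function.comp_apply, AffineMap.lineMap_apply_one,
    AffineMap.lineMap_apply_zero, sub_zero, div_one] at this
  linarith

section Gateaux

variable {H : Type*} [NormedAddCommGroup H] [InnerProductSpace ℝ H]
  {Ω : Set H} {f : H → ℝ} {g : H → H} {β : ℝ}

lemma IsGateauxGradientOn.hasDerivAt_line (hg : IsGateauxGradientOn f g Ω) {u v : H} {t₀ : ℝ}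
    (h : u + t₀ • v ∈ Ω) :
    HasDerivAt (fun t : ℝ => f (u + t • v)) ⟪g (u + t₀ • v), v⟫ t₀ := by
  have hshift : (fun t : ℝ => f (u + t • v)) = fun t => f (u + t₀ • v + (t - t₀) • v) := by
    funext t
    rw [add_assoc, ← add_smul, add_sub_cancel]
  rw [hshift]
  exact HasDerivAt.comp_sub_const t₀ t₀ (by rw [sub_self]; exact hg _ h v)

lemma IsGateauxGradientOn.le_add_inner_add_sq (hg : IsGateauxGradientOn f g Ω)
    (hLip : ∀ x ∈ Ω, ∀ y ∈ Ω, ‖g x - g y‖ ≤ β * ‖x - y‖) {u e : H}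
    (hseg : ∀ t ∈ Icc (0 : ℝ) 1, u + t • e ∈ Ω) :
    f (u + e) ≤ f u + ⟪g u, e⟫ + β / 2 * ‖e‖ ^ 2 := by
  have hu : u ∈ Ω := by simpa using hseg 0 (left_mem_Icc.2 zero_le_one)
  have hslope : ∀ t ∈ Icc (0 : ℝ) 1, ⟪g (u + t • e), e⟫ ≤ ⟪g u, e⟫ + β * ‖e‖ ^ 2 * t := by
    intro t ht
    calc ⟪g (u + t • e), e⟫ = ⟪g u, e⟫ + ⟪g (u + t • e) - g u, e⟫ := by
          rw [inner_sub_left]; ring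
      _ ≤ ⟪g u, e⟫ + ‖g (u + t • e) - g u‖ * ‖e‖ := by gcongr; exact real_inner_le_norm _ _
      _ ≤ ⟪g u, e⟫ + β * ‖(u + t • e) - u‖ * ‖e‖ := by gcongr; exact hLip _ (hseg t ht) _ hu
      _ = ⟪g u, e⟫ + β * ‖e‖ ^ 2 * t := by
          rw [add_sub_cancel_left, norm_smul, Real.norm_of_nonneg ht.1]; ring
  have := le_add_add_half_of_hasDerivAt (fun t ht => hg.hasDerivAt_line (hseg t ht)) hslope
  simp only [one_smul, zero_smul, add_zero] at this
  linarith

lemma IsGateauxGradientOn.add_inner_add_sq_div_le (hg : IsGateauxGradientOn f g Ω)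
    (hf : ConvexOn ℝ Ω f) (hβ : 0 < β)
    (hLip : ∀ x ∈ Ω, ∀ y ∈ Ω, ‖g x - g y‖ ≤ β * ‖x - y‖) {u w : H} (hu : u ∈ Ω) (hw : w ∈ Ω)
    (hball : closedBall u ‖u - w‖ ⊆ Ω) :
    f w + ⟪g w, u - w⟫ + ‖g u - g w‖ ^ 2 / (2 * β) ≤ f u := by
  set p := g u - g w
  -- the gradient step from `u` for the tilted function `f - ⟪g w, ·⟫`, minimised at `w`
  set e := -(β⁻¹ • p)
  have hne : ‖e‖ ≤ ‖u - w‖ := by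
    rw [norm_neg, norm_smul, Real.norm_of_nonneg (inv_nonneg.2 hβ.le), inv_mul_le_iff₀ hβ]
    exact hLip _ hu _ hw
  have hseg : ∀ t ∈ Icc (0 : ℝ) 1, u + t • e ∈ Ω := fun t ht => hball <| by
    rw [mem_closedBall, dist_eq_norm, add_sub_cancel_left, norm_smul, Real.norm_of_nonneg ht.1]
    exact (mul_le_of_le_one_left (norm_nonneg _) ht.2).trans hne
  have hue : u + e ∈ Ω := by simpa using hseg 1 (right_mem_Icc.2 zero_le_one)
  have hdescent := hg.le_add_inner_add_sq hLip hseg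
  have hsupport := hf.add_le_of_hasDerivAt_line hw hue (hg w hw (u + e - w))
  have hpe : ⟪p, e⟫ = -(β⁻¹ * ‖p‖ ^ 2) := by
    rw [inner_neg_right, real_inner_smul_right, real_inner_self_eq_norm_sq]
  have he : ‖e‖ ^ 2 = β⁻¹ ^ 2 * ‖p‖ ^ 2 := by
    rw [norm_neg, norm_smul, Real.norm_of_nonneg (inv_nonneg.2 hβ.le), mul_pow]
  rw [show u + e - w = (u - w) + e by abel, inner_add_right] at hsupport
  have hp : ⟪g u, e⟫ = ⟪g w, e⟫ + ⟪p, e⟫ := by rw [inner_sub_left]; ring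
  have hquad : -(β⁻¹ * ‖p‖ ^ 2) + β / 2 * (β⁻¹ ^ 2 * ‖p‖ ^ 2) = -(‖p‖ ^ 2 / (2 * β)) := by
    field_simp; ring
  rw [hp, hpe, he] at hdescent
  linarith

lemma IsGateauxGradientOn.sq_norm_sub_le_inner_of_closedBall_subset
    (hg : IsGateauxGradientOn f g Ω) (hf : ConvexOn ℝ Ω f) (hβ : 0 < β)
    (hLip : ∀ x ∈ Ω, ∀ y ∈ Ω, ‖g x - g y‖ ≤ β * ‖x - y‖) {u w : H} (hu : u ∈ Ω) (hw : w ∈ Ω)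
    (hballu : closedBall u ‖u - w‖ ⊆ Ω) (hballw : closedBall w ‖u - w‖ ⊆ Ω) :
    ‖g u - g w‖ ^ 2 ≤ β * ⟪g u - g w, u - w⟫ := by
  have huw := hg.add_inner_add_sq_div_le hf hβ hLip hu hw hballu
  have hwu := hg.add_inner_add_sq_div_le hf hβ hLip hw hu (by rwa [norm_sub_rev])
  rw [norm_sub_rev, ← neg_sub u w, inner_neg_right] at hwu
  have hsum : ‖g u - g w‖ ^ 2 / β ≤ ⟪g u - g w, u - w⟫ := by
    rw [inner_sub_left]
    have : ‖g u - g w‖ ^ 2 / β = 2 * (‖g u - g w‖ ^ 2 / (2 * β)) := by field_simp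
    linarith
  rwa [div_le_iff₀' hβ] at hsum

end Gateaux

section Chaining

variable {H : Type*} [NormedAddCommGroup H] [InnerProductSpace ℝ H]

open Finset in
lemma sq_norm_sum_le_inner_sum_card_smul {ι : Type*} (s : Finset ι) (D : ι → H) (e : H) {β : ℝ}
    (h : ∀ i ∈ s, ‖D i‖ ^ 2 ≤ β * ⟪D i, e⟫) :
    ‖∑ i ∈ s, D i‖ ^ 2 ≤ β * ⟪∑ i ∈ s, D i, (#s : ℝ) • e⟫ :=
  calc ‖∑ i ∈ s, D i‖ ^ 2 ≤ (∑ i ∈ s, ‖D i‖) ^ 2 := by gcongr; exact norm_sum_le _ _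
    _ ≤ #s * ∑ i ∈ s, ‖D i‖ ^ 2 := sq_sum_le_card_mul_sum_sq
    _ ≤ #s * ∑ i ∈ s, β * ⟪D i, e⟫ := by gcongr with i hi; exact h i hi
    _ = β * ⟪∑ i ∈ s, D i, (#s : ℝ) • e⟫ := by
        rw [real_inner_smul_right, sum_inner, ← mul_sum]; ring

lemma sq_norm_sub_le_inner_of_segment {g : H → H} {β δ : ℝ} (hδ : 0 < δ) {x y : H}
    (hloc : ∀ u ∈ segment ℝ x y, ∀ w ∈ segment ℝ x y, ‖u - w‖ ≤ δ →
      ‖g u - g w‖ ^ 2 ≤ β * ⟪g u - g w, u - w⟫) :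
    ‖g y - g x‖ ^ 2 ≤ β * ⟪g y - g x, y - x⟫ := by
  obtain ⟨n, hn⟩ := exists_nat_gt (‖y - x‖ / δ)
  have hn0 : (0 : ℝ) < n := lt_of_le_of_lt (by positivity) hn
  set e := (n : ℝ)⁻¹ • (y - x)
  set z : ℕ → H := fun i => x + (i : ℝ) • e
  have hz : ∀ i ≤ n, z i ∈ segment ℝ x y := by
    intro i hi
    rw [segment_eq_image']
    refine ⟨i / n, ⟨by positivity, div_le_one_of_le₀ (by exact_mod_cast hi) hn0.le⟩, ?_⟩
    simp only [z, e, smul_smul, div_eq_mul_inv]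
  have hstep : ∀ i, z (i + 1) - z i = e := by
    intro i
    simp only [z, Nat.cast_succ, add_smul, one_smul]
    abel
  have hne : ‖e‖ ≤ δ := by
    rw [norm_smul, Real.norm_of_nonneg (by positivity), inv_mul_le_iff₀ hn0]
    rw [div_lt_iff₀ hδ] at hn
    linarith
  have hn_smul : (n : ℝ) • e = y - x := by
    simp only [e, smul_smul, mul_inv_cancel₀ hn0.ne', one_smul]
  have htel : ∑ i ∈ Finset.range n, (g (z (i + 1)) - g (z i)) = g y - g x := by
    rw [Finset.sum_range_sub (fun i => g (z i))]
    simp only [z, hn_smul, add_sub_cancel, Nat.cast_zero, zero_smul, add_zero]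
  have hchain := sq_norm_sum_le_inner_sum_card_smul (Finset.range n)
    (fun i => g (z (i + 1)) - g (z i)) e fun i hi => by
      have hi := Finset.mem_range.1 hi
      simpa only [hstep] using hloc _ (hz _ hi) _ (hz _ hi.le) (by rw [hstep]; exact hne)
  rwa [htel, Finset.card_range, hn_smul] at hchain

end Chaining

theorem baillon_haddad_gateaux_hilbert_general
    {H : Type*} [NormedAddCommGroup H] [InnerProductSpace ℝ H]
    (Ω : Set H) (hΩopen : IsOpen Ω) (hΩconv : Convex ℝ Ω)
    (f : H → ℝ) (hconv : ConvexOn ℝ Ω f)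
    (g : H → H)
    (hGateaux : ∀ x ∈ Ω, ∀ v : H,
      HasDerivAt (fun t : ℝ => f (x + t • v)) ⟪g x, v⟫ 0)
    (β : ℝ) (hβ : 0 < β)
    (hLip : ∀ x ∈ Ω, ∀ y ∈ Ω, ‖g x - g y‖ ≤ β * ‖x - y‖) :
    ∀ x ∈ Ω, ∀ y ∈ Ω, β * ⟪g x - g y, x - y⟫ ≥ ‖g x - g y‖ ^ 2 := by
  intro x hx y hy
  have hKΩ : segment ℝ y x ⊆ Ω := hΩconv.segment_subset hy hx
  have hK : IsCompact (segment ℝ y x) := by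
    rw [segment_eq_image']
    exact isCompact_Icc.image (by fun_prop)
  obtain ⟨δ, hδ, hδΩ⟩ := hK.exists_cthickening_subset_open hΩopen hKΩ
  have hball : ∀ u ∈ segment ℝ y x, ∀ r ≤ δ, closedBall u r ⊆ Ω := fun u hu r hr =>
    (closedBall_subset_closedBall hr).trans ((closedBall_subset_cthickening hu δ).trans hδΩ)
  refine sq_norm_sub_le_inner_of_segment hδ fun u hu w hw huw => ?_
  exact IsGateauxGradientOn.sq_norm_sub_le_inner_of_closedBall_subset hGateaux hconv hβ hLip
    (hKΩ hu) (hKΩ hw) (hball u hu _ huw) (hball w hw _ huw)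

theorem baillon_haddad_gateaux_hilbert
    {H : Type*} [NormedAddCommGroup H] [InnerProductSpace ℝ H] [CompleteSpace H]
    (Ω : Set H) (hΩne : Ω.Nonempty) (hΩopen : IsOpen Ω) (hΩconv : Convex ℝ Ω)
    (f : H → ℝ) (hconv : ConvexOn ℝ Ω f)
    (g : H → H)
    (hGateaux : ∀ x ∈ Ω, ∀ v : H,
      HasDerivAt (fun t : ℝ => f (x + t • v)) ⟪g x, v⟫ 0)
    (β : ℝ) (hβ : 0 < β)
    (hLip : ∀ x ∈ Ω, ∀ y ∈ Ω, ‖g x - g y‖ ≤ β * ‖x - y‖) :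
    ∀ x ∈ Ω, ∀ y ∈ Ω, β * ⟪g x - g y, x - y⟫ ≥ ‖g x - g y‖ ^ 2 :=
  baillon_haddad_gateaux_hilbert_general Ω hΩopen hΩconv f hconv g hGateaux β hβ hLip
end

section
/- Let H be a real Hilbert space, Ω ⊆ H nonempty open convex, and f : Ω → ℝ convex. Then f is Fréchet differentiable on Ω with locally Lipschitz gradient (f ∈ C^{1,+}(Ω)) if and only if f is Gâteaux differentiable on Ω and ∇f is locally cocoercive, i.e., for every x ∈ Ω there exist a neighborhood U ⊆ Ω of x and β > 0 such that β⟨∇f(u) − ∇f(v), u − v⟩ ≥ ‖∇f(u) − ∇f(v)‖² for all u, v ∈ U. -/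
open scoped RealInnerProductSpace
open Set Filter Topology Metric

/-!
Cocoercivity gives Lipschitz continuity of the gradient by Cauchy–Schwarz, and a Gâteaux
derivative that is `K`-Lipschitz near `x` is a Fréchet derivative, because the mean value
inequality along segments bounds the first-order remainder by `K ‖h‖ ^ 2`.

Conversely, let `∇f` be `L`-Lipschitz near `x`. For `u, v` close to `x`, the gradient inequality
of the convex function `f` at `u` and the descent inequality at `v`, both evaluated at
`w = v - (2L)⁻¹ (∇f v - ∇f u)`, give `f u + ⟪∇f u, v - u⟫ + (4L)⁻¹ ‖∇f v - ∇f u‖ ^ 2 ≤ f v`.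
Adding this to the same inequality with `u` and `v` swapped yields cocoercivity with `β = 2L`.
-/

section LineDeriv

variable {𝕜 E F : Type*} [NontriviallyNormedField 𝕜] [NormedAddCommGroup E] [NormedSpace 𝕜 E]
  [NormedAddCommGroup F] [NormedSpace 𝕜 F]

theorem HasLineDerivAt.hasDerivAt_comp_add_smul {f : E → F} {f' : F} {x v : E} {t₀ : 𝕜}
    (hf : HasLineDerivAt 𝕜 f f' (x + t₀ • v) v) :
    HasDerivAt (fun t : 𝕜 => f (x + t • v)) f' t₀ := by
  have h := HasDerivAt.comp_sub_const (a := t₀) t₀ (f := fun s : 𝕜 => f (x + t₀ • v + s • v))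
    (by rw [sub_self]; exact hf)
  convert h using 2 with t
  rw [sub_smul, add_add_sub_cancel]

end LineDeriv

theorem ConvexOn.add_le_of_hasLineDerivAt {E : Type*} [NormedAddCommGroup E] [NormedSpace ℝ E]
    {s : Set E} {f : E → ℝ} (hf : ConvexOn ℝ s f) {u z : E} {D : ℝ} (hu : u ∈ s) (hz : z ∈ s)
    (hD : HasLineDerivAt ℝ f D u (z - u)) :
    f u + D ≤ f z := by
  let ℓ : ℝ →ᵃ[ℝ] E := AffineMap.lineMap u z
  have hℓ : ∀ t, ℓ t = u + t • (z - u) := fun t => by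
    rw [AffineMap.lineMap_apply_module', add_comm]
  have hφ : HasDerivAt (f ∘ ℓ) D 0 := by
    rw [show f ∘ ℓ = fun t => f (u + t • (z - u)) from funext fun t => congrArg f (hℓ t)]
    exact hD
  have hslope := (hf.comp_affineMap ℓ).le_slope_of_hasDerivAt (x := 0) (y := 1)
    (by simpa [hℓ]) (by simpa [hℓ]) one_pos hφ
  simp only [slope_def_field, Function.comp_apply, hℓ, one_smul, zero_smul, add_zero,
    add_sub_cancel, sub_zero, div_one] at hslope
  linarith

theorem sub_inv_smul_mem_ball {E : Type*} [NormedAddCommGroup E] [NormedSpace ℝ E]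
    {x u v d : E} {r L : ℝ} (hL : 0 < L) (hu : u ∈ ball x (r / 2)) (hv : v ∈ ball x (r / 2))
    (hd : ‖d‖ ≤ L * ‖v - u‖) :
    v - (2 * L)⁻¹ • d ∈ ball x r := by
  rw [mem_ball] at *
  have huv : dist v u < r := by linarith [dist_triangle_right v u x]
  calc dist (v - (2 * L)⁻¹ • d) x ≤ dist v x + ‖(2 * L)⁻¹ • d‖ := by
        rw [dist_eq_norm, dist_eq_norm, sub_right_comm]
        exact norm_sub_le _ _
    _ ≤ dist v x + (2 * L)⁻¹ * (L * dist v u) := by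
        rw [norm_smul, Real.norm_of_nonneg (by positivity), dist_eq_norm v u]
        gcongr
    _ = dist v x + dist v u / 2 := by field_simp
    _ < r := by linarith

section InnerProductSpace

variable {H : Type*} [NormedAddCommGroup H] [InnerProductSpace ℝ H] {f : H → ℝ} {g : H → H}

def CocoerciveOn (g : H → H) (β : ℝ) (U : Set H) : Prop :=
  ∀ u ∈ U, ∀ v ∈ U, ‖g u - g v‖ ^ 2 ≤ β * ⟪g u - g v, u - v⟫

theorem CocoerciveOn.lipschitzOnWith {β : ℝ} {U : Set H} (h : CocoerciveOn g β U) (hβ : 0 ≤ β) :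
    LipschitzOnWith β.toNNReal g U := by
  refine LipschitzOnWith.of_dist_le_mul fun u hu v hv => ?_
  rw [dist_eq_norm, dist_eq_norm, Real.coe_toNNReal _ hβ]
  rcases (norm_nonneg (g u - g v)).eq_or_lt with h0 | hpos
  · rw [← h0]; positivity
  · have hsq := calc ‖g u - g v‖ ^ 2 ≤ β * ⟪g u - g v, u - v⟫ := h u hu v hv
      _ ≤ β * (‖g u - g v‖ * ‖u - v‖) := by gcongr; exact real_inner_le_norm _ _
    nlinarith

theorem abs_sub_sub_inner_le_of_lipschitzOnWith {s : Set H} (hs : Convex ℝ s) {K : NNReal}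
    (hgat : ∀ y ∈ s, ∀ v, HasLineDerivAt ℝ f ⟪g y, v⟫ y v) (hg : LipschitzOnWith K g s)
    {v w : H} (hv : v ∈ s) (hw : w ∈ s) :
    |f w - f v - ⟪g v, w - v⟫| ≤ K * ‖w - v‖ ^ 2 := by
  set h := w - v
  have hseg : ∀ t ∈ Icc (0 : ℝ) 1, v + t • h ∈ s := fun t ht => hs.add_smul_sub_mem hv hw ht
  let F : ℝ → ℝ := fun t => f (v + t • h) - t * ⟪g v, h⟫
  have hF : ∀ t ∈ Icc (0 : ℝ) 1,
      HasDerivWithinAt F ⟪g (v + t • h) - g v, h⟫ (Icc 0 1) t := fun t ht => by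
    rw [inner_sub_left]
    exact ((hgat _ (hseg t ht) h).hasDerivAt_comp_add_smul.sub
      (hasDerivAt_mul_const ⟪g v, h⟫)).hasDerivWithinAt
  have hF_le : ∀ t ∈ Icc (0 : ℝ) 1, ‖⟪g (v + t • h) - g v, h⟫‖ ≤ K * ‖h‖ * ‖h‖ := fun t ht => by
    refine (norm_inner_le_norm _ _).trans (mul_le_mul_of_nonneg_right ?_ (norm_nonneg h))
    refine hg.norm_sub_le_of_le (hseg t ht) hv ?_
    rw [add_sub_cancel_left, norm_smul, Real.norm_of_nonneg ht.1]
    exact mul_le_of_le_one_left (norm_nonneg h) ht.2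
  have hmvt := (convex_Icc (0 : ℝ) 1).norm_image_sub_le_of_norm_hasDerivWithin_le hF hF_le
    (left_mem_Icc.2 zero_le_one) (right_mem_Icc.2 zero_le_one)
  simp only [F, one_smul, zero_smul, add_zero, one_mul, zero_mul, sub_zero, norm_one, mul_one,
    Real.norm_eq_abs] at hmvt
  rwa [show v + h = w from add_sub_cancel v w, sub_right_comm, mul_assoc, ← sq] at hmvt

theorem hasGradientAt_of_lipschitzOnWith [CompleteSpace H] {U : Set H} {x : H} {K : NNReal}
    (hU : U ∈ 𝓝 x) (hgat : ∀ y ∈ U, ∀ v, HasLineDerivAt ℝ f ⟪g y, v⟫ y v)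
    (hg : LipschitzOnWith K g U) :
    HasGradientAt f (g x) x := by
  obtain ⟨r, hr, hball⟩ := Metric.mem_nhds_iff.mp hU
  rw [hasGradientAt_iff_hasFDerivAt, hasFDerivAt_iff_isLittleO_nhds_zero]
  refine Asymptotics.IsBigO.trans_isLittleO (g := fun h : H => ‖h‖ ^ 2) ?_
    (Asymptotics.isLittleO_norm_pow_id one_lt_two)
  refine Asymptotics.IsBigO.of_bound K ?_
  filter_upwards [ball_mem_nhds (0 : H) hr] with h hh
  have hxh : x + h ∈ ball x r := by simpa using hh
  simpa using abs_sub_sub_inner_le_of_lipschitzOnWith (convex_ball x r)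
    (fun y hy => hgat y (hball hy)) (hg.mono hball) (mem_ball_self hr) hxh

theorem ConvexOn.add_inner_add_sq_le {s : Set H} (hf : ConvexOn ℝ s f)
    (hgat : ∀ y ∈ s, ∀ v, HasLineDerivAt ℝ f ⟪g y, v⟫ y v) {K : NNReal} (hK : 0 < K)
    (hg : LipschitzOnWith K g s) {u v : H} (hu : u ∈ s) (hv : v ∈ s)
    (hw : v - (2 * (K : ℝ))⁻¹ • (g v - g u) ∈ s) :
    f u + ⟪g u, v - u⟫ + (4 * (K : ℝ))⁻¹ * ‖g v - g u‖ ^ 2 ≤ f v := by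
  -- `c = (2K)⁻¹` maximises the gain `c - K c²` in the estimate below.
  set c := (2 * (K : ℝ))⁻¹
  set d := g v - g u
  set w := v - c • d
  have hconv := hf.add_le_of_hasLineDerivAt hu hw (hgat u hu (w - u))
  have hdesc := (abs_le.mp (abs_sub_sub_inner_le_of_lipschitzOnWith hf.1 hgat hg hv hw)).2
  have hwu : w - u = (v - u) - c • d := by simp only [w]; abel
  have hwv : w - v = -(c • d) := by simp only [w]; abel
  rw [hwu, inner_sub_right, real_inner_smul_right] at hconv
  rw [hwv, inner_neg_right, real_inner_smul_right, norm_neg, norm_smul, Real.norm_eq_abs,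
    abs_of_pos (by positivity : 0 < c)] at hdesc
  have hd : ⟪g v, d⟫ - ⟪g u, d⟫ = ‖d‖ ^ 2 := by
    rw [← inner_sub_left, real_inner_self_eq_norm_sq]
  have hgain : c * ⟪g v, d⟫ - c * ⟪g u, d⟫ - K * (c * ‖d‖) ^ 2 = (4 * (K : ℝ))⁻¹ * ‖d‖ ^ 2 := by
    have hK0 : (K : ℝ) ≠ 0 := by positivity
    rw [← mul_sub, hd]
    simp only [c]
    field_simp
    ring
  linarith

theorem cocoerciveOn_of_forall_add_inner_add_sq_le {U : Set H} {L : ℝ} (hL : 0 < L)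
    (h : ∀ u ∈ U, ∀ v ∈ U, f u + ⟪g u, v - u⟫ + (4 * L)⁻¹ * ‖g v - g u‖ ^ 2 ≤ f v) :
    CocoerciveOn g (2 * L) U := by
  intro u hu v hv
  have huv := h u hu v hv
  have hvu := h v hv u hu
  rw [norm_sub_rev] at huv
  have hinner : ⟪g u, v - u⟫ + ⟪g v, u - v⟫ = -⟪g u - g v, u - v⟫ := by
    rw [← neg_sub u v, inner_neg_right, inner_sub_left]
    ring
  have hhalf : (2 * L)⁻¹ * ‖g u - g v‖ ^ 2 ≤ ⟪g u - g v, u - v⟫ := by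
    rw [show (2 * L)⁻¹ = (4 * L)⁻¹ + (4 * L)⁻¹ by field_simp; ring, add_mul]
    linarith
  calc ‖g u - g v‖ ^ 2 = 2 * L * ((2 * L)⁻¹ * ‖g u - g v‖ ^ 2) := by field_simp
    _ ≤ 2 * L * ⟪g u - g v, u - v⟫ := by gcongr

theorem exists_cocoerciveOn_of_lipschitzOnWith {Ω s : Set H} {x : H} {K : NNReal}
    (hΩ : Ω ∈ 𝓝 x) (hf : ConvexOn ℝ Ω f) (hgat : ∀ y ∈ Ω, ∀ v, HasLineDerivAt ℝ f ⟪g y, v⟫ y v)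
    (hs : s ∈ 𝓝 x) (hg : LipschitzOnWith K g s) :
    ∃ U ∈ 𝓝 x, U ⊆ Ω ∧ ∃ β : ℝ, 0 < β ∧ CocoerciveOn g β U := by
  obtain ⟨r, hr, hball⟩ := Metric.mem_nhds_iff.mp (inter_mem hs hΩ)
  have hbΩ : ball x r ⊆ Ω := fun y hy => (hball hy).2
  have hhalf : ball x (r / 2) ⊆ ball x r := ball_subset_ball (half_le_self hr.le)
  have hL : 0 < K + 1 := by positivity
  have hgL : LipschitzOnWith (K + 1) g (ball x r) :=
    (hg.mono fun y hy => (hball hy).1).weaken le_self_add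
  refine ⟨ball x (r / 2), ball_mem_nhds x (half_pos hr), hhalf.trans hbΩ, 2 * (K + 1 : NNReal),
    by positivity, cocoerciveOn_of_forall_add_inner_add_sq_le (f := f) (by positivity)
      fun u hu v hv => ?_⟩
  exact (hf.subset hbΩ (convex_ball x r)).add_inner_add_sq_le (fun y hy => hgat y (hbΩ hy)) hL
    hgL (hhalf hu) (hhalf hv)
    (sub_inv_smul_mem_ball (by positivity) hu hv (hgL.norm_sub_le (hhalf hv) (hhalf hu)))

end InnerProductSpace

theorem C1plus_iff_locally_cocoercive_general
    {H : Type*} [NormedAddCommGroup H] [InnerProductSpace ℝ H] [CompleteSpace H]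
    (Ω : Set H) (hΩopen : IsOpen Ω)
    (f : H → ℝ) (hconv : ConvexOn ℝ Ω f) :
    (∃ g : H → H, (∀ x ∈ Ω, HasGradientAt f (g x) x) ∧
      ∀ x ∈ Ω, ∃ s ∈ nhds x, ∃ K : NNReal, LipschitzOnWith K g s) ↔
    (∃ g : H → H,
      (∀ x ∈ Ω, ∀ v : H, HasDerivAt (fun t : ℝ => f (x + t • v)) ⟪g x, v⟫ 0) ∧
      ∀ x ∈ Ω, ∃ U ∈ nhds x, U ⊆ Ω ∧ ∃ β : ℝ, 0 < β ∧
        ∀ u ∈ U, ∀ v ∈ U, β * ⟪g u - g v, u - v⟫ ≥ ‖g u - g v‖ ^ 2) := by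
  constructor
  · rintro ⟨g, hgrad, hlip⟩
    have hgat : ∀ x ∈ Ω, ∀ v, HasLineDerivAt ℝ f ⟪g x, v⟫ x v := fun x hx v =>
      (hgrad x hx).hasFDerivAt.hasLineDerivAt v
    refine ⟨g, hgat, fun x hx => ?_⟩
    obtain ⟨s, hs, K, hK⟩ := hlip x hx
    exact exists_cocoerciveOn_of_lipschitzOnWith (hΩopen.mem_nhds hx) hconv hgat hs hK
  · rintro ⟨g, hgat, hcoco⟩
    refine ⟨g, fun x hx => ?_, fun x hx => ?_⟩ <;> obtain ⟨U, hU, hUΩ, β, hβ, hβU⟩ := hcoco x hx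
    · exact hasGradientAt_of_lipschitzOnWith hU (fun y hy => hgat y (hUΩ hy))
        (CocoerciveOn.lipschitzOnWith hβU hβ.le)
    · exact ⟨U, hU, _, CocoerciveOn.lipschitzOnWith hβU hβ.le⟩

theorem C1plus_iff_locally_cocoercive
    {H : Type*} [NormedAddCommGroup H] [InnerProductSpace ℝ H] [CompleteSpace H]
    (Ω : Set H) (hΩne : Ω.Nonempty) (hΩopen : IsOpen Ω) (hΩconv : Convex ℝ Ω)
    (f : H → ℝ) (hconv : ConvexOn ℝ Ω f) :
    (∃ g : H → H, (∀ x ∈ Ω, HasGradientAt f (g x) x) ∧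
      ∀ x ∈ Ω, ∃ s ∈ nhds x, ∃ K : NNReal, LipschitzOnWith K g s) ↔
    (∃ g : H → H,
      (∀ x ∈ Ω, ∀ v : H, HasDerivAt (fun t : ℝ => f (x + t • v)) ⟪g x, v⟫ 0) ∧
      ∀ x ∈ Ω, ∃ U ∈ nhds x, U ⊆ Ω ∧ ∃ β : ℝ, 0 < β ∧
        ∀ u ∈ U, ∀ v ∈ U, β * ⟪g u - g v, u - v⟫ ≥ ‖g u - g v‖ ^ 2) :=
  C1plus_iff_locally_cocoercive_general Ω hΩopen f hconv
end
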